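/- arXiv:gr-qc/9901087 — 9 statements merged into one kernel-verified Lean document; each statement's English description precedes it below -/
import Mathlib

section
/- Let (A, w) be an EYM solution on (0, R) for some R > 0 with A(r) > 0 for all r ∈ (0, R). If there exists r₀ ∈ (0, R) such that A(r₀) > 1 − Λ·r₀²/3, then A(r) → +∞ and w'(r) → 0 as r → 0⁺. -/
open Filter Topology Set

/-- The quantity Φ(r) = 1 − A(r) − (1 − w(r)²)²/r² − Λ·r². -/
noncomputable def Phi (Λ : ℝ) (A w : ℝ → ℝ) (r : ℝ) : ℝ :=
  1 - A r - (1 - (w r) ^ 2) ^ 2 / r ^ 2 - Λ * r ^ 2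

/-- `(A, w)` is a static spherically symmetric Einstein SU(2)-Yang–Mills
solution with cosmological constant `Λ` on the set `I`. -/
def IsEYM (Λ : ℝ) (A w : ℝ → ℝ) (I : Set ℝ) : Prop :=
  (∀ r ∈ I, DifferentiableAt ℝ A r) ∧
  (∀ r ∈ I, DifferentiableAt ℝ w r) ∧
  (∀ r ∈ I, DifferentiableAt ℝ (deriv w) r) ∧
  (∀ r ∈ I, r * deriv A r + 2 * A r * (deriv w r) ^ 2 = Phi Λ A w r) ∧
  (∀ r ∈ I, r ^ 2 * A r * deriv (deriv w) r + r * Phi Λ A w r * deriv w r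
      + w r * (1 - (w r) ^ 2) = 0)

/-! The mass `m = r (1 - A) / 2 - Λ r³ / 6` is nondecreasing by the first equation, so
`m r ≤ m r₀ < 0` for `r ≤ r₀`; this gives `r A(r) ≥ c > 0` near `0`, hence `A → ∞`.
For `w'` the barrier `b √r` works: once `w'` touches `± b √r`, the second equation forces `w''`
past `(b √r)'`, because `r A ≥ c` dominates and the Yang–Mills terms
`(b / √r) (1 - w²)² - w (1 - w²)` are bounded below by `-√r / b` uniformly in `w`.
Starting from a small `r₁` with `|w'(r₁)| ≤ b √r₁` and moving towards `0`, `w'` can therefore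
never leave the barrier, so `|w'| ≤ b √r → 0`. -/

lemma image_le_of_deriv_lt_deriv_boundary_left {f f' B B' : ℝ → ℝ} {a b : ℝ}
    (hf : ∀ x ∈ Icc a b, HasDerivAt f (f' x) x) (hB : ∀ x ∈ Icc a b, HasDerivAt B (B' x) x)
    (hb : f b ≤ B b) (bound : ∀ x ∈ Ioc a b, f x = B x → B' x < f' x) :
    ∀ x ∈ Icc a b, f x ≤ B x := by
  have hneg : ∀ {x}, x ∈ Icc (-b) (-a) → -x ∈ Icc a b :=
    fun hx ↦ ⟨le_neg.1 hx.2, neg_le.1 hx.1⟩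
  have hf' : ∀ x ∈ Icc (-b) (-a), HasDerivAt (fun y ↦ f (-y)) (-f' (-x)) x := fun x hx ↦ by
    simpa [Function.comp_def] using (hf _ (hneg hx)).comp x (hasDerivAt_neg x)
  have hB' : ∀ x ∈ Icc (-b) (-a), HasDerivAt (fun y ↦ B (-y)) (-B' (-x)) x := fun x hx ↦ by
    simpa [Function.comp_def] using (hB _ (hneg hx)).comp x (hasDerivAt_neg x)
  intro x hx
  simpa using image_le_of_deriv_right_lt_deriv_boundary'
    (fun y hy ↦ (hf' y hy).continuousAt.continuousWithinAt)
    (fun y hy ↦ (hf' y (Ico_subset_Icc_self hy)).hasDerivWithinAt)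
    (by simpa using hb) (fun y hy ↦ (hB' y hy).continuousAt.continuousWithinAt)
    (fun y hy ↦ (hB' y (Ico_subset_Icc_self hy)).hasDerivWithinAt)
    (fun y hy hfy ↦ neg_lt_neg (bound (-y) ⟨lt_neg.1 hy.2, neg_le.1 hy.1⟩ hfy))
    (⟨neg_le_neg hx.2, neg_le_neg hx.1⟩ : -x ∈ Icc (-b) (-a))

lemma neg_inv_le_mul_sq_sub (q x : ℝ) (hq : 1 ≤ q) :
    -q⁻¹ ≤ q * (1 - x ^ 2) ^ 2 - x * (1 - x ^ 2) := by
  have hq0 : 0 < q := by linarith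
  rw [neg_le, ← sub_nonneg, ← mul_nonneg_iff_of_pos_left hq0]
  have key : q * (q * (1 - x ^ 2) ^ 2 - x * (1 - x ^ 2)) + 1 ≥ 0 := by
    rcases le_or_gt (x ^ 2) 4 with hx | hx
    · nlinarith [sq_nonneg (2 * q * (1 - x ^ 2) - x)]
    · have h1 : q * (1 - x ^ 2) ≤ 1 - x ^ 2 := by nlinarith
      have h2 : 1 - x ^ 2 - x < 0 := by nlinarith [sq_nonneg (x + 2), sq_nonneg (x - 2)]
      nlinarith [mul_nonneg_of_nonpos_of_nonpos (by linarith : q * (1 - x ^ 2) ≤ 0)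
        (by linarith : q * (1 - x ^ 2) - x ≤ 0)]
  field_simp
  linarith

/-- At a point where `w' = b √u`, the second EYM equation turns this into `w'' > (b √u)'`. -/
lemma mul_div_sqrt_lt_neg_Phi {Λ b c u : ℝ} {A w : ℝ → ℝ} (hu : 0 < u) (hub : √u ≤ b)
    (hbc : 8 ≤ c * b ^ 2) (hcA : c ≤ u * A u) (hΛ : 8 * (u * (1 - Λ * u ^ 2)) ≤ c) :
    u ^ 2 * A u * (b / (2 * √u)) < -(u * Phi Λ A w u * (b * √u)) - w u * (1 - w u ^ 2) := by
  obtain ⟨s, hs, rfl⟩ : ∃ s, 0 < s ∧ u = s ^ 2 :=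
    ⟨√u, Real.sqrt_pos.2 hu, (Real.sq_sqrt hu.le).symm⟩
  rw [Real.sqrt_sq hs.le] at hub ⊢
  have hb : 0 < b := hs.trans_le hub
  have hc : 0 < c := by nlinarith
  have hsplit : -(s ^ 2 * Phi Λ A w (s ^ 2) * (b * s)) - w (s ^ 2) * (1 - w (s ^ 2) ^ 2)
      - (s ^ 2) ^ 2 * A (s ^ 2) * (b / (2 * s))
      = s ^ 2 * A (s ^ 2) * (b * s) / 2 - s ^ 2 * (1 - Λ * (s ^ 2) ^ 2) * (b * s)
        + ((b / s) * (1 - w (s ^ 2) ^ 2) ^ 2 - w (s ^ 2) * (1 - w (s ^ 2) ^ 2)) := by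
    unfold Phi
    field_simp
    ring
  have hA : c * (b * s) / 2 ≤ s ^ 2 * A (s ^ 2) * (b * s) / 2 := by gcongr
  have hK : s ^ 2 * (1 - Λ * (s ^ 2) ^ 2) * (b * s) ≤ c / 8 * (b * s) := by gcongr; linarith
  have hsrc :
      -(s / b) ≤ (b / s) * (1 - w (s ^ 2) ^ 2) ^ 2 - w (s ^ 2) * (1 - w (s ^ 2) ^ 2) := by
    simpa using neg_inv_le_mul_sq_sub (b / s) (w (s ^ 2)) ((one_le_div hs).2 hub)
  have hsb : s / b ≤ c / 8 * (b * s) := by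
    rw [div_le_iff₀ hb]; nlinarith
  nlinarith [mul_pos hc (mul_pos hb hs)]

lemma tendsto_atTop_of_le_mul {f : ℝ → ℝ} {c : ℝ} (hc : 0 < c)
    (h : ∀ᶠ t in 𝓝[>] 0, c ≤ t * f t) : Tendsto f (𝓝[>] 0) atTop := by
  refine tendsto_atTop_mono' _ ?_ (tendsto_inv_nhdsGT_zero.const_mul_atTop hc)
  filter_upwards [h, self_mem_nhdsWithin] with t ht (htpos : 0 < t)
  rwa [← div_eq_mul_inv, div_le_iff₀' htpos]

/-- `A = 1 - 2 m / r - Λ r² / 3`: the Misner–Sharp mass `m` of the metric. -/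
noncomputable def mass (Λ : ℝ) (A : ℝ → ℝ) (r : ℝ) : ℝ :=
  r * (1 - A r) / 2 - Λ * r ^ 3 / 6

namespace IsEYM

variable {Λ R : ℝ} {A w : ℝ → ℝ} {I : Set ℝ}

lemma neg (h : IsEYM Λ A w I) : IsEYM Λ A (-w) I := by
  obtain ⟨hA, hw, hw', h₁, h₂⟩ := h
  have hPhi : Phi Λ A (-w) = Phi Λ A w := by ext r; simp [Phi]
  refine ⟨hA, fun r hr ↦ (hw r hr).neg, ?_, fun r hr ↦ ?_, fun r hr ↦ ?_⟩
  · simpa [deriv.neg'] using fun r hr ↦ (hw' r hr).neg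
  · simpa [deriv.neg', hPhi] using h₁ r hr
  · simp only [deriv.neg', deriv.fun_neg', hPhi, Pi.neg_apply]
    linear_combination -h₂ r hr

lemma hasDerivAt_mass (h : IsEYM Λ A w I) {r : ℝ} (hr : r ∈ I) :
    HasDerivAt (mass Λ A) ((1 - w r ^ 2) ^ 2 / (2 * r ^ 2) + A r * deriv w r ^ 2) r := by
  have hA := (h.1 r hr).hasDerivAt
  have hcube : HasDerivAt (fun x : ℝ ↦ x ^ 3) (3 * r ^ 2) r := by simpa using hasDerivAt_pow 3 r
  refine ((((hasDerivAt_id' r).mul (hA.const_sub 1)).div_const 2).sub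
    ((hcube.const_mul Λ).div_const 6)).congr_deriv ?_
  have := h.2.2.2.1 r hr
  unfold Phi at this
  linear_combination -this / 2

lemma monotoneOn_mass (h : IsEYM Λ A w I) (hconv : Convex ℝ I)
    (hA : ∀ r ∈ I, 0 ≤ A r) : MonotoneOn (mass Λ A) I := by
  refine monotoneOn_of_hasDerivWithinAt_nonneg hconv
    (fun r hr ↦ (h.hasDerivAt_mass hr).continuousAt.continuousWithinAt)
    (fun r hr ↦ (h.hasDerivAt_mass (interior_subset hr)).hasDerivWithinAt) fun r hr ↦ ?_
  have := hA r (interior_subset hr)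
  positivity

lemma exists_pos_eventually_le_mul (h : IsEYM Λ A w (Ioo 0 R))
    (hA : ∀ r ∈ Ioo 0 R, 0 < A r) {r₀ : ℝ} (hr₀ : r₀ ∈ Ioo 0 R)
    (hAr₀ : 1 - Λ * r₀ ^ 2 / 3 < A r₀) :
    ∃ c > 0, ∀ᶠ t in 𝓝[>] 0, c ≤ t * A t := by
  have hmass : mass Λ A r₀ < 0 := by
    have := mul_pos hr₀.1 (sub_pos.2 hAr₀)
    unfold mass; nlinarith
  have hmono := h.monotoneOn_mass (convex_Ioo 0 R) fun r hr ↦ (hA r hr).le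
  have hvanish : Tendsto (fun t : ℝ ↦ t - Λ * t ^ 3 / 3) (𝓝[>] 0) (𝓝 0) :=
    (Continuous.tendsto' (by fun_prop) 0 0 (by simp)).mono_left nhdsWithin_le_nhds
  refine ⟨-mass Λ A r₀, by linarith, ?_⟩
  filter_upwards [Ioc_mem_nhdsGT hr₀.1, hvanish.eventually (lt_mem_nhds hmass)] with t ht hts
  have := hmono ⟨ht.1, ht.2.trans_lt hr₀.2⟩ hr₀ ht.2
  unfold mass at this hts ⊢
  linarith [show t * (1 - A t) = t - t * A t by ring]

lemma deriv_le_mul_sqrt (h : IsEYM Λ A w (Ioo 0 R)) {b c r₁ : ℝ} (hr₁R : r₁ < R)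
    (hbc : 8 ≤ c * b ^ 2) (hr₁b : √r₁ ≤ b)
    (hsmall : ∀ t ∈ Ioc 0 r₁, c ≤ t * A t ∧ 8 * (t * (1 - Λ * t ^ 2)) ≤ c)
    (hr₁ : deriv w r₁ ≤ b * √r₁) : ∀ t ∈ Ioc 0 r₁, deriv w t ≤ b * √t := by
  have hc : 0 < c := by nlinarith
  intro t ht
  have hsub : ∀ x ∈ Icc t r₁, x ∈ Ioo 0 R :=
    fun x hx ↦ ⟨ht.1.trans_le hx.1, hx.2.trans_lt hr₁R⟩
  refine image_le_of_deriv_lt_deriv_boundary_left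
    (fun x hx ↦ (h.2.2.1 x (hsub x hx)).hasDerivAt)
    (fun x hx ↦ (Real.hasDerivAt_sqrt (hsub x hx).1.ne').const_mul b) hr₁ (fun x hx hx' ↦ ?_)
    t ⟨le_rfl, ht.2⟩
  have hx0 : 0 < x := ht.1.trans hx.1
  obtain ⟨hcA, hΛ⟩ := hsmall x ⟨hx0, hx.2⟩
  have hpos : 0 < x ^ 2 * A x := by nlinarith
  have hode := h.2.2.2.2 x ⟨hx0, hx.2.trans_lt hr₁R⟩
  have := mul_div_sqrt_lt_neg_Phi (w := w) hx0 ((Real.sqrt_le_sqrt hx.2).trans hr₁b) hbc hcA hΛ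
  rw [← hx'] at this
  refine lt_of_mul_lt_mul_left ?_ hpos.le
  rw [mul_one_div]
  linarith

lemma tendsto_deriv_nhdsGT_zero (h : IsEYM Λ A w (Ioo 0 R)) (hR : 0 < R) {c : ℝ} (hc : 0 < c)
    (hcA : ∀ᶠ t in 𝓝[>] 0, c ≤ t * A t) : Tendsto (deriv w) (𝓝[>] 0) (𝓝 0) := by
  have hpot : Tendsto (fun t : ℝ ↦ 8 * (t * (1 - Λ * t ^ 2))) (𝓝[>] 0) (𝓝 0) :=
    (Continuous.tendsto' (by fun_prop) 0 0 (by simp)).mono_left nhdsWithin_le_nhds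
  obtain ⟨r₁, hr₁, hsub⟩ := mem_nhdsGT_iff_exists_Ioc_subset.1
    (hcA.and ((hpot.eventually (ge_mem_nhds hc)).and (Ioo_mem_nhdsGT hR)))
  have hr₁R : r₁ < R := (hsub ⟨hr₁, le_rfl⟩).2.2.2
  have hsmall : ∀ t ∈ Ioc 0 r₁, c ≤ t * A t ∧ 8 * (t * (1 - Λ * t ^ 2)) ≤ c :=
    fun t ht ↦ ⟨(hsub ht).1, (hsub ht).2.1⟩
  obtain ⟨b, hbc, hr₁b, hend⟩ : ∃ b : ℝ, 8 ≤ c * b ^ 2 ∧ √r₁ ≤ b ∧ |deriv w r₁| ≤ b * √r₁ :=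
    ((((tendsto_pow_atTop two_ne_zero).const_mul_atTop hc).eventually_ge_atTop 8).and
      ((eventually_ge_atTop _).and ((tendsto_id.atTop_mul_const
        (Real.sqrt_pos.2 hr₁)).eventually_ge_atTop _))).exists
  have hbound : ∀ t ∈ Ioc 0 r₁, |deriv w t| ≤ b * √t := fun t ht ↦ by
    refine abs_le.2 ⟨?_, h.deriv_le_mul_sqrt hr₁R hbc hr₁b hsmall (le_of_abs_le hend) t ht⟩
    have := h.neg.deriv_le_mul_sqrt hr₁R hbc hr₁b hsmall
      (by simpa using neg_le.1 (neg_le_of_abs_le hend)) t ht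
    simp only [deriv.neg'] at this
    exact neg_le.1 this
  have hbarrier : Tendsto (fun t ↦ b * √t) (𝓝[>] 0) (𝓝 0) := by
    simpa using ((Real.continuous_sqrt.tendsto 0).const_mul b).mono_left nhdsWithin_le_nhds
  refine squeeze_zero_norm' ?_ hbarrier
  filter_upwards [Ioc_mem_nhdsGT hr₁] with t ht using hbound t ht

end IsEYM

theorem stmt_2_general (Λ R : ℝ) (A w : ℝ → ℝ)
    (hEYM : IsEYM Λ A w (Ioo 0 R))
    (hApos : ∀ r ∈ Ioo (0 : ℝ) R, 0 < A r)
    (r₀ : ℝ) (hr₀ : r₀ ∈ Ioo (0 : ℝ) R)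
    (hA : A r₀ > 1 - Λ * r₀ ^ 2 / 3) :
    Filter.Tendsto A (𝓝[>] 0) atTop ∧
    Filter.Tendsto (deriv w) (𝓝[>] 0) (𝓝 0) := by
  obtain ⟨c, hc, hcA⟩ := hEYM.exists_pos_eventually_le_mul hApos hr₀ hA
  exact ⟨tendsto_atTop_of_le_mul hc hcA,
    hEYM.tendsto_deriv_nhdsGT_zero (hr₀.1.trans hr₀.2) hc hcA⟩

/-- if `A > 0` on `(0, R)` and `A(r₀) > 1 − Λ r₀²/3` somewhere,
then `A → +∞` and `w' → 0` as `r → 0⁺`. -/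
theorem stmt_2 (Λ R : ℝ) (A w : ℝ → ℝ) (hR : 0 < R)
    (hEYM : IsEYM Λ A w (Ioo 0 R))
    (hApos : ∀ r ∈ Ioo (0 : ℝ) R, 0 < A r)
    (r₀ : ℝ) (hr₀ : r₀ ∈ Ioo (0 : ℝ) R)
    (hA : A r₀ > 1 - Λ * r₀ ^ 2 / 3) :
    Filter.Tendsto A (𝓝[>] 0) atTop ∧
    Filter.Tendsto (deriv w) (𝓝[>] 0) (𝓝 0) :=
  stmt_2_general Λ R A w hEYM hApos r₀ hr₀ hA
end

section
/- Let 0 < r₀ < r₁ and let (A, w) be an EYM solution on (r₀, r₁). If A(r) converges as r → r₀⁺ to a finite limit that is strictly positive, then w is bounded near r₀: lim sup_{r → r₀⁺} w(r) < +∞ and lim inf_{r → r₀⁺} w(r) > −∞. -/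
/-!
The first equation gives `2 A w'² ≤ C - (r A)'` on `(r₀, b]`, where `C = 1 + |Λ| b²` bounds
`Φ + A`. Once `A ≥ L / 2`, the inequality `|w'| ≤ (1 + w'²) / 2` turns this into
`|w'| ≤ G'` for `G r = r / 2 + (C r - r A(r)) / (2L)`, so `|w(b) - w(r)| ≤ G(b) - G(r)`,
which stays bounded as `r → r₀⁺` because `A` does.
-/

open Filter Topology Set

theorem abs_sub_le_sub_of_abs_deriv_le {f g : ℝ → ℝ} {a b : ℝ} (hab : a ≤ b)
    (hf : ∀ x ∈ Icc a b, DifferentiableAt ℝ f x) (hg : ∀ x ∈ Icc a b, DifferentiableAt ℝ g x)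
    (h : ∀ x ∈ Ioo a b, |deriv f x| ≤ deriv g x) :
    |f b - f a| ≤ g b - g a := by
  have hmono : ∀ s : ℝ, |s| = 1 → MonotoneOn (fun x => g x + s * f x) (Icc a b) := by
    intro s hs
    have hd : ∀ x ∈ Icc a b, DifferentiableAt ℝ (fun x => g x + s * f x) x :=
      fun x hx => (hg x hx).add ((hf x hx).const_mul s)
    refine monotoneOn_of_deriv_nonneg (convex_Icc a b)
      (fun x hx => (hd x hx).continuousAt.continuousWithinAt)
      (fun x hx => (hd x (interior_subset hx)).differentiableWithinAt) fun x hx => ?_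
    rw [interior_Icc] at hx
    have hx' := Ioo_subset_Icc_self hx
    rw [deriv_fun_add (hg x hx') ((hf x hx').const_mul s), deriv_const_mul _ (hf x hx')]
    have : |s * deriv f x| ≤ deriv g x := by rw [abs_mul, hs, one_mul]; exact h x hx
    linarith [neg_abs_le (s * deriv f x)]
  have ha : a ∈ Icc a b := left_mem_Icc.2 hab
  have hb : b ∈ Icc a b := right_mem_Icc.2 hab
  have hadd := hmono 1 abs_one ha hb hab
  have hsub := hmono (-1) (by simp) ha hb hab
  simp only [one_mul, neg_one_mul] at hadd hsub
  exact abs_sub_le_iff.2 ⟨by linarith, by linarith⟩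

theorem Phi_le (Λ : ℝ) (A w : ℝ → ℝ) (r : ℝ) : Phi Λ A w r ≤ 1 - A r - Λ * r ^ 2 := by
  have := div_nonneg (sq_nonneg (1 - w r ^ 2)) (sq_nonneg r)
  unfold Phi
  linarith

/-- An antiderivative of the bound for `|w'|` that the first EYM equation yields on `(0, b]`
once `A ≥ L / 2`. -/
noncomputable def eymMajorant (Λ L b : ℝ) (A : ℝ → ℝ) (r : ℝ) : ℝ :=
  r / 2 + ((1 + |Λ| * b ^ 2) * r - r * A r) / (2 * L)

theorem hasDerivAt_eymMajorant (Λ L b : ℝ) {A : ℝ → ℝ} {r : ℝ} (hA : DifferentiableAt ℝ A r) :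
    HasDerivAt (eymMajorant Λ L b A)
      (1 / 2 + (1 + |Λ| * b ^ 2 - A r - r * deriv A r) / (2 * L)) r := by
  refine (((hasDerivAt_id' r).div_const 2).fun_add
    ((((hasDerivAt_id' r).const_mul (1 + |Λ| * b ^ 2)).fun_sub
      ((hasDerivAt_id' r).fun_mul hA.hasDerivAt)).div_const (2 * L))).congr_deriv ?_
  ring

namespace IsEYM

variable {Λ : ℝ} {A w : ℝ → ℝ} {I : Set ℝ}

theorem abs_deriv_le_deriv_eymMajorant (h : IsEYM Λ A w I) {L b r : ℝ} (hr : r ∈ I)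
    (hL : 0 < L) (hAr : L / 2 ≤ A r) (hrb : |r| ≤ b) :
    |deriv w r| ≤ deriv (eymMajorant Λ L b A) r := by
  rw [(hasDerivAt_eymMajorant Λ L b (h.1 r hr)).deriv]
  set C := 1 + |Λ| * b ^ 2
  have hΛ : -(Λ * r ^ 2) ≤ |Λ| * b ^ 2 := by
    have : r ^ 2 ≤ b ^ 2 := sq_le_sq' (abs_le.1 hrb).1 (abs_le.1 hrb).2
    nlinarith [neg_abs_le Λ, abs_nonneg Λ, sq_nonneg r]
  have hfirst : 2 * A r * deriv w r ^ 2 ≤ C - A r - r * deriv A r := by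
    linarith [h.2.2.2.1 r hr, Phi_le Λ A w r]
  have hsq : deriv w r ^ 2 ≤ (C - A r - r * deriv A r) / L := by
    rw [le_div_iff₀ hL]
    nlinarith [sq_nonneg (deriv w r)]
  have hamgm : |deriv w r| ≤ (1 + deriv w r ^ 2) / 2 := by
    nlinarith [sq_nonneg (|deriv w r| - 1), sq_abs (deriv w r)]
  calc |deriv w r| ≤ (1 + deriv w r ^ 2) / 2 := hamgm
    _ ≤ 1 / 2 + (C - A r - r * deriv A r) / L / 2 := by linarith
    _ = 1 / 2 + (C - A r - r * deriv A r) / (2 * L) := by ring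

theorem exists_abs_le {r₀ r₁ b L U : ℝ} (h : IsEYM Λ A w (Ioo r₀ r₁)) (hr₀ : 0 ≤ r₀)
    (hb : b ∈ Ioo r₀ r₁) (hL : 0 < L) (hA : ∀ r ∈ Ioo r₀ b, L / 2 ≤ A r ∧ A r ≤ U) :
    ∃ K, ∀ r ∈ Ioo r₀ b, |w r| ≤ K := by
  set G := eymMajorant Λ L b A
  have hU : 0 ≤ U := by
    obtain ⟨hlo, hhi⟩ := hA ((r₀ + b) / 2) ⟨by linarith [hb.1], by linarith [hb.1]⟩
    linarith
  refine ⟨|w b| + G b + b * U / (2 * L), fun r hr => ?_⟩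
  have hr0 : 0 < r := hr₀.trans_lt hr.1
  have hIcc : Icc r b ⊆ Ioo r₀ r₁ := fun x hx => ⟨hr.1.trans_le hx.1, hx.2.trans_lt hb.2⟩
  have hdiff : |w b - w r| ≤ G b - G r :=
    abs_sub_le_sub_of_abs_deriv_le hr.2.le (fun x hx => h.2.1 x (hIcc hx))
      (fun x hx => (hasDerivAt_eymMajorant Λ L b (h.1 x (hIcc hx))).differentiableAt)
      fun x hx => h.abs_deriv_le_deriv_eymMajorant (hIcc (Ioo_subset_Icc_self hx)) hL
        (hA x ⟨hr.1.trans hx.1, hx.2⟩).1 (abs_le.2 ⟨by linarith [hx.1, hx.2], hx.2.le⟩)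
  have hGr : -(b * U / (2 * L)) ≤ G r := by
    have hrA : r * A r ≤ b * U := by nlinarith [hA r hr, hr.2]
    have hC : 0 ≤ (1 + |Λ| * b ^ 2) * r / (2 * L) := by positivity
    have hG : G r = r / 2 + (1 + |Λ| * b ^ 2) * r / (2 * L) - r * A r / (2 * L) := by
      simp only [G, eymMajorant]
      ring
    rw [hG]
    linarith [div_le_div_of_nonneg_right hrA (by positivity : (0 : ℝ) ≤ 2 * L)]
  linarith [abs_sub_abs_le_abs_sub (w r) (w b), abs_sub_comm (w r) (w b)]

end IsEYM

theorem limsup_coe_lt_top_and_bot_lt_liminf_coe {α : Type*} {l : Filter α} {f : α → ℝ} {K : ℝ}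
    (h : ∀ᶠ x in l, |f x| ≤ K) :
    limsup (fun x => (f x : EReal)) l < ⊤ ∧ ⊥ < liminf (fun x => (f x : EReal)) l :=
  ⟨(limsup_le_of_le (h := h.mono fun _ hx => EReal.coe_le_coe_iff.2 (abs_le.1 hx).2)).trans_lt
      (EReal.coe_lt_top K),
    (EReal.bot_lt_coe (-K)).trans_le
      (le_liminf_of_le (h := h.mono fun _ hx => EReal.coe_le_coe_iff.2 (abs_le.1 hx).1))⟩

/-- if `A` tends to a finite strictly positive limit as `r → r₀⁺`,
then `w` is bounded near `r₀`. -/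
theorem stmt_4 (Λ r₀ r₁ : ℝ) (A w : ℝ → ℝ)
    (hr₀ : 0 < r₀) (hr₁ : r₀ < r₁)
    (hEYM : IsEYM Λ A w (Ioo r₀ r₁))
    (L : ℝ) (hL : 0 < L) (hA : Filter.Tendsto A (𝓝[>] r₀) (𝓝 L)) :
    Filter.limsup (fun r => (w r : EReal)) (𝓝[>] r₀) < ⊤ ∧
    ⊥ < Filter.liminf (fun r => (w r : EReal)) (𝓝[>] r₀) := by
  obtain ⟨c, hc, hsub⟩ := mem_nhdsGT_iff_exists_Ioo_subset.1 <|
    ((hA.eventually (eventually_ge_nhds (half_lt_self hL))).and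
      (hA.eventually (eventually_le_nhds (lt_add_one L)))).and (Ioo_mem_nhdsGT hr₁)
  obtain ⟨b, hb₀, hbc⟩ := exists_between (show r₀ < c from hc)
  have hb : b ∈ Ioo r₀ r₁ := (hsub ⟨hb₀, hbc⟩).2
  obtain ⟨K, hK⟩ := hEYM.exists_abs_le hr₀.le hb hL fun r hr => (hsub ⟨hr.1, hr.2.trans hbc⟩).1
  exact limsup_coe_lt_top_and_bot_lt_liminf_coe (mem_of_superset (Ioo_mem_nhdsGT hb₀) hK)
end

section
/- Let 0 < r₀ < r₁ and let (A, w) be an EYM solution on (r₀, r₁). Suppose A(r) converges as r → r₀⁺ to a finite strictly positive limit and w(r) converges as r → r₀⁺ to a finite limit. Then lim sup_{r → r₀⁺} w'(r)² < +∞. -/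
open Filter Topology Set

section Gronwall

variable {E : Type*} [NormedAddCommGroup E] [NormedSpace ℝ E]

theorem norm_le_gronwallBound_of_norm_deriv_left_le {f f' : ℝ → E} {δ K ε a b : ℝ}
    (hf' : ∀ x ∈ Icc a b, HasDerivAt f (f' x) x) (hb : ‖f b‖ ≤ δ)
    (bound : ∀ x ∈ Icc a b, ‖f' x‖ ≤ K * ‖f x‖ + ε) (hab : a ≤ b) :
    ‖f a‖ ≤ gronwallBound δ K ε (b - a) := by
  have hmem : ∀ t ∈ Icc 0 (b - a), b - t ∈ Icc a b := fun t ⟨h₀, h₁⟩ =>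
    ⟨by linarith, by linarith⟩
  have hderiv : ∀ t ∈ Icc 0 (b - a),
      HasDerivAt (fun t => f (b - t)) (-f' (b - t)) t := fun t ht => by
    simpa [Function.comp_def] using (hf' _ (hmem t ht)).scomp t ((hasDerivAt_id t).const_sub b)
  have key := norm_le_gronwallBound_of_norm_deriv_right_le (f := fun t => f (b - t))
    (fun t ht => (hderiv t ht).continuousAt.continuousWithinAt)
    (fun t ht => (hderiv t (Ico_subset_Icc_self ht)).hasDerivWithinAt)
    (by simpa using hb)
    (fun t ht => by simpa using bound _ (hmem t (Ico_subset_Icc_self ht)))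
    (b - a) ⟨by linarith, le_rfl⟩
  simpa using key

theorem exists_eventually_norm_le_of_norm_deriv_le_nhdsGT {f f' : ℝ → E} {K ε a : ℝ}
    (hK : 0 ≤ K) (hε : 0 ≤ ε)
    (h : ∀ᶠ x in 𝓝[>] a, HasDerivAt f (f' x) x ∧ ‖f' x‖ ≤ K * ‖f x‖ + ε) :
    ∃ C, ∀ᶠ x in 𝓝[>] a, ‖f x‖ ≤ C := by
  obtain ⟨ρ, hρ, hsub⟩ := mem_nhdsGT_iff_exists_Ioo_subset.mp h
  obtain ⟨b, hab, hbρ⟩ := exists_between (mem_Ioi.mp hρ)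
  refine ⟨gronwallBound ‖f b‖ K ε (b - a), ?_⟩
  filter_upwards [Ioo_mem_nhdsGT hab] with x hx
  have hIcc : Icc x b ⊆ Ioo a ρ := fun y hy => ⟨hx.1.trans_le hy.1, hy.2.trans_lt hbρ⟩
  calc ‖f x‖ ≤ gronwallBound ‖f b‖ K ε (b - x) :=
        norm_le_gronwallBound_of_norm_deriv_left_le (fun y hy => (hsub (hIcc hy)).1) le_rfl
          (fun y hy => (hsub (hIcc hy)).2) hx.2.le
    _ ≤ _ := gronwallBound_mono (norm_nonneg _) hε hK (by linarith [hx.1])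

end Gronwall

theorem tendsto_Phi {Λ L w₀ r₀ : ℝ} {A w : ℝ → ℝ} {s : Set ℝ} (hr₀ : r₀ ≠ 0)
    (hA : Tendsto A (𝓝[s] r₀) (𝓝 L)) (hw : Tendsto w (𝓝[s] r₀) (𝓝 w₀)) :
    Tendsto (Phi Λ A w) (𝓝[s] r₀)
      (𝓝 (1 - L - (1 - w₀ ^ 2) ^ 2 / r₀ ^ 2 - Λ * r₀ ^ 2)) := by
  have hr : Tendsto (fun r : ℝ => r) (𝓝[s] r₀) (𝓝 r₀) := tendsto_nhdsWithin_of_tendsto_nhds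
    tendsto_id
  exact ((tendsto_const_nhds.sub hA).sub (((tendsto_const_nhds.sub (hw.pow 2)).pow 2).div
    (hr.pow 2) (pow_ne_zero 2 hr₀))).sub (tendsto_const_nhds.mul (hr.pow 2))

theorem IsEYM.deriv_deriv_eq {Λ : ℝ} {A w : ℝ → ℝ} {I : Set ℝ} (h : IsEYM Λ A w I) {r : ℝ}
    (hr : r ∈ I) (hr₀ : r ≠ 0) (hA : A r ≠ 0) :
    deriv (deriv w) r = -(Phi Λ A w r / (r * A r) * deriv w r
      + w r * (1 - w r ^ 2) / (r ^ 2 * A r)) := by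
  field_simp
  linear_combination h.2.2.2.2 r hr

theorem IsEYM.exists_norm_deriv_deriv_le_nhdsGT {Λ L w₀ r₀ r₁ : ℝ} {A w : ℝ → ℝ}
    (h : IsEYM Λ A w (Ioo r₀ r₁)) (hr₀ : 0 < r₀) (hr₁ : r₀ < r₁) (hL : L ≠ 0)
    (hA : Tendsto A (𝓝[>] r₀) (𝓝 L)) (hw : Tendsto w (𝓝[>] r₀) (𝓝 w₀)) :
    ∃ K ε : ℝ, 0 ≤ K ∧ 0 ≤ ε ∧ ∀ᶠ r in 𝓝[>] r₀,
      HasDerivAt (deriv w) (deriv (deriv w) r) r ∧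
        ‖deriv (deriv w) r‖ ≤ K * ‖deriv w r‖ + ε := by
  have hr : Tendsto (fun r : ℝ => r) (𝓝[>] r₀) (𝓝 r₀) := tendsto_nhdsWithin_of_tendsto_nhds
    tendsto_id
  obtain ⟨p₀, hp⟩ : ∃ p₀, Tendsto (fun r => Phi Λ A w r / (r * A r)) (𝓝[>] r₀) (𝓝 p₀) :=
    ⟨_, (tendsto_Phi hr₀.ne' hA hw).div (hr.mul hA) (mul_ne_zero hr₀.ne' hL)⟩
  obtain ⟨q₀, hq⟩ : ∃ q₀, Tendsto (fun r => w r * (1 - w r ^ 2) / (r ^ 2 * A r)) (𝓝[>] r₀)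
      (𝓝 q₀) :=
    ⟨_, (hw.mul (tendsto_const_nhds.sub (hw.pow 2))).div ((hr.pow 2).mul hA)
      (mul_ne_zero (pow_ne_zero 2 hr₀.ne') hL)⟩
  refine ⟨|p₀| + 1, |q₀| + 1, by positivity, by positivity, ?_⟩
  filter_upwards [Ioo_mem_nhdsGT hr₁, self_mem_nhdsWithin, hA.eventually_ne hL,
    hp.abs.eventually (eventually_lt_nhds (lt_add_one _)),
    hq.abs.eventually (eventually_lt_nhds (lt_add_one _))] with r hrI hrpos hAr hpr hqr
  refine ⟨(h.2.2.1 r hrI).hasDerivAt, ?_⟩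
  rw [h.deriv_deriv_eq hrI (hr₀.trans hrpos).ne' hAr, norm_neg, Real.norm_eq_abs,
    Real.norm_eq_abs]
  calc _ ≤ |Phi Λ A w r / (r * A r)| * |deriv w r| + |w r * (1 - w r ^ 2) / (r ^ 2 * A r)| :=
        (abs_add_le _ _).trans_eq (by rw [abs_mul])
    _ ≤ _ := by gcongr

/-- if `A` tends to a finite strictly positive limit and `w` tends
to a finite limit as `r → r₀⁺`, then `limsup_{r→r₀⁺} w'(r)² < +∞`. -/
theorem stmt_6 (Λ r₀ r₁ : ℝ) (A w : ℝ → ℝ)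
    (hr₀ : 0 < r₀) (hr₁ : r₀ < r₁)
    (hEYM : IsEYM Λ A w (Ioo r₀ r₁))
    (L : ℝ) (hL : 0 < L) (hA : Filter.Tendsto A (𝓝[>] r₀) (𝓝 L))
    (w₀ : ℝ) (hw : Filter.Tendsto w (𝓝[>] r₀) (𝓝 w₀)) :
    Filter.limsup (fun r => (((deriv w r) ^ 2 : ℝ) : EReal)) (𝓝[>] r₀) < ⊤ := by
  obtain ⟨K, ε, hK, hε, hODE⟩ := hEYM.exists_norm_deriv_deriv_le_nhdsGT hr₀ hr₁ hL.ne' hA hw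
  obtain ⟨C, hC⟩ := exists_eventually_norm_le_of_norm_deriv_le_nhdsGT hK hε hODE
  have hsq : ∀ᶠ r in 𝓝[>] r₀, (((deriv w r) ^ 2 : ℝ) : EReal) ≤ ((C ^ 2 : ℝ) : EReal) :=
    hC.mono fun r hr => EReal.coe_le_coe_iff.mpr <| by
      rw [← sq_abs]
      exact pow_le_pow_left₀ (abs_nonneg _) hr 2
  exact (limsup_le_of_le (by isBoundedDefault) hsq).trans_lt (EReal.coe_lt_top _)
end

section
/- Let 0 < r₀ < r₁ and let (A, w) be an EYM solution on (r₀, r₁). If A(r) → +∞ as r → r₀⁺, then lim sup_{r → r₀⁺} w'(r)² = +∞. -/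
/-! If `w'²` stayed bounded near `r₀`, then `w` would be bounded there too, and the first field
equation `r A' = Φ − 2 A w'²` would give `A' ≥ −K (A + 1)` wherever `A ≥ 0`. Then `(A + 1) e^{K r}`
is nondecreasing, so `A` stays bounded as `r → r₀⁺`, contradicting `A → +∞`. -/

open Filter Topology Set

lemma Filter.exists_eventually_le_of_limsup_coe_ne_top {α : Type*} {l : Filter α} {f : α → ℝ}
    (h : limsup (fun x => (f x : EReal)) l ≠ ⊤) : ∃ M : ℝ, ∀ᶠ x in l, f x ≤ M := by
  obtain ⟨c, hlc, hc⟩ := exists_between h.lt_top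
  refine ⟨c.toReal, (eventually_lt_of_limsup_lt hlc).mono fun x hx => ?_⟩
  rw [← EReal.coe_le_coe_iff, EReal.coe_toReal hc.ne (ne_bot_of_gt hx)]
  exact hx.le

lemma exists_norm_le_of_norm_deriv_le {E : Type*} [NormedAddCommGroup E] [NormedSpace ℝ E]
    {f : ℝ → E} {a b C : ℝ} (hf : ∀ x ∈ Ioo a b, DifferentiableAt ℝ f x)
    (hC : ∀ x ∈ Ioo a b, ‖deriv f x‖ ≤ C) : ∃ W, ∀ x ∈ Ioo a b, ‖f x‖ ≤ W := by
  rcases (Ioo a b).eq_empty_or_nonempty with hab | ⟨m, hm⟩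
  · exact ⟨0, by simp [hab]⟩
  refine ⟨‖f m‖ + C * (b - a), fun x hx => ?_⟩
  have hC0 : 0 ≤ C := (norm_nonneg _).trans (hC m hm)
  have hxm : ‖x - m‖ ≤ b - a := by
    rw [Real.norm_eq_abs, abs_sub_le_iff]
    constructor <;> linarith [hx.1, hx.2, hm.1, hm.2]
  calc ‖f x‖ ≤ ‖f m‖ + ‖f x - f m‖ := norm_le_norm_add_norm_sub' (f x) (f m)
    _ ≤ ‖f m‖ + C * ‖x - m‖ := by
      gcongr; exact (convex_Ioo a b).norm_image_sub_le_of_norm_deriv_le hf hC hm hx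
    _ ≤ ‖f m‖ + C * (b - a) := by gcongr

lemma not_tendsto_atTop_of_neg_mul_le_deriv {f : ℝ → ℝ} {a b K : ℝ} (hab : a < b)
    (hf : ∀ x ∈ Ioo a b, DifferentiableAt ℝ f x)
    (hK : ∀ x ∈ Ioo a b, -K * (f x + 1) ≤ deriv f x) : ¬ Tendsto f (𝓝[>] a) atTop := by
  intro htop
  set g : ℝ → ℝ := fun x => (f x + 1) * Real.exp (K * x)
  have hg : ∀ x ∈ Ioo a b,
      HasDerivAt g ((deriv f x + K * (f x + 1)) * Real.exp (K * x)) x := fun x hx => by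
    have hexp : HasDerivAt (fun y => Real.exp (K * y)) (Real.exp (K * x) * K) x := by
      simpa using ((hasDerivAt_id x).const_mul K).exp
    exact (((hf x hx).hasDerivAt.add_const 1).mul hexp).congr_deriv (by ring)
  have hmono : MonotoneOn g (Ioo a b) := by
    refine monotoneOn_of_hasDerivWithinAt_nonneg (convex_Ioo a b)
      (f' := fun x => (deriv f x + K * (f x + 1)) * Real.exp (K * x))
      (fun x hx => (hg x hx).continuousAt.continuousWithinAt) ?_ ?_ <;> rw [interior_Ioo]
    · exact fun x hx => (hg x hx).hasDerivWithinAt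
    · exact fun x hx => mul_nonneg (by linarith [hK x hx]) (Real.exp_pos _).le
  obtain ⟨m, ham, hmb⟩ := exists_between hab
  have hbound : ∀ᶠ x in 𝓝[>] a, f x + 1 ≤ g m * Real.exp (-(K * x)) := by
    filter_upwards [Ioo_mem_nhdsGT ham] with x hx
    rw [Real.exp_neg, ← div_eq_mul_inv, le_div_iff₀ (Real.exp_pos _)]
    exact hmono ⟨hx.1, hx.2.trans hmb⟩ ⟨ham, hmb⟩ hx.2.le
  have hlim : Tendsto (fun x => g m * Real.exp (-(K * x))) (𝓝[>] a)
      (𝓝 (g m * Real.exp (-(K * a)))) :=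
    ((by fun_prop : Continuous fun x => g m * Real.exp (-(K * x))).tendsto a).mono_left
      nhdsWithin_le_nhds
  exact not_tendsto_atTop_of_tendsto_nhds hlim
    (tendsto_atTop_mono' _ hbound (tendsto_atTop_add_const_right _ 1 htop))

lemma neg_sub_le_Phi {Λ r₀ r₁ r W : ℝ} {A w : ℝ → ℝ} (hr₀ : 0 < r₀) (hr : r ∈ Icc r₀ r₁)
    (hw : |w r| ≤ W) :
    -A r - ((1 + W ^ 2) ^ 2 / r₀ ^ 2 + |Λ| * r₁ ^ 2) ≤ Phi Λ A w r := by
  have hr0 : 0 ≤ r := hr₀.le.trans hr.1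
  have hYM : (1 - w r ^ 2) ^ 2 / r ^ 2 ≤ (1 + W ^ 2) ^ 2 / r₀ ^ 2 := by
    have habs : |1 - w r ^ 2| ≤ 1 + W ^ 2 := by
      rw [abs_le]
      constructor <;> nlinarith [sq_abs (w r), abs_nonneg (w r), sq_nonneg (w r)]
    rw [← sq_abs (1 - w r ^ 2)]
    gcongr
    exact hr.1
  have hΛ : Λ * r ^ 2 ≤ |Λ| * r₁ ^ 2 := by
    refine (le_abs_self _).trans ?_
    rw [abs_mul, abs_of_nonneg (sq_nonneg r)]
    gcongr
    exact hr.2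
  unfold Phi
  linarith

lemma IsEYM.mono {Λ : ℝ} {A w : ℝ → ℝ} {I J : Set ℝ} (h : IsEYM Λ A w I) (hJI : J ⊆ I) :
    IsEYM Λ A w J :=
  ⟨fun r hr => h.1 r (hJI hr), fun r hr => h.2.1 r (hJI hr), fun r hr => h.2.2.1 r (hJI hr),
    fun r hr => h.2.2.2.1 r (hJI hr), fun r hr => h.2.2.2.2 r (hJI hr)⟩

lemma IsEYM.exists_neg_mul_le_deriv {Λ r₀ r₁ M W : ℝ} {A w : ℝ → ℝ} (hr₀ : 0 < r₀)
    (h : IsEYM Λ A w (Ioo r₀ r₁)) (hA : ∀ r ∈ Ioo r₀ r₁, 0 ≤ A r)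
    (hw' : ∀ r ∈ Ioo r₀ r₁, deriv w r ^ 2 ≤ M) (hw : ∀ r ∈ Ioo r₀ r₁, |w r| ≤ W) :
    ∃ K, ∀ r ∈ Ioo r₀ r₁, -K * (A r + 1) ≤ deriv A r := by
  obtain ⟨C, hC, hΦ⟩ : ∃ C ≥ 0, ∀ r ∈ Ioo r₀ r₁, -A r - C ≤ Phi Λ A w r :=
    ⟨_, by positivity, fun r hr => neg_sub_le_Phi hr₀ (Ioo_subset_Icc_self hr) (hw r hr)⟩
  refine ⟨(1 + 2 * |M| + C) / r₀, fun r hr => ?_⟩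
  have hr_pos : 0 < r := hr₀.trans hr.1
  have hA1 : 0 ≤ A r + 1 := by linarith [hA r hr]
  have hkin : A r * deriv w r ^ 2 ≤ |M| * A r := by
    nlinarith [hw' r hr, le_abs_self M, hA r hr]
  have hrA : -((1 + 2 * |M| + C) * (A r + 1)) ≤ r * deriv A r := by
    nlinarith [h.2.2.2.1 r hr, hΦ r hr, abs_nonneg M, mul_nonneg hC (hA r hr)]
  calc -((1 + 2 * |M| + C) / r₀) * (A r + 1) = -((1 + 2 * |M| + C) * (A r + 1) / r₀) := by ring
    _ ≤ -((1 + 2 * |M| + C) * (A r + 1) / r) := by gcongr; exact hr.1.le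
    _ ≤ deriv A r := by rw [neg_le, le_div_iff₀ hr_pos]; linarith

/-- if `A → +∞` as `r → r₀⁺`, then `limsup_{r→r₀⁺} w'(r)² = +∞`. -/
theorem stmt_7 (Λ r₀ r₁ : ℝ) (A w : ℝ → ℝ)
    (hr₀ : 0 < r₀) (hr₁ : r₀ < r₁)
    (hEYM : IsEYM Λ A w (Ioo r₀ r₁))
    (hA : Filter.Tendsto A (𝓝[>] r₀) atTop) :
    Filter.limsup (fun r => (((deriv w r) ^ 2 : ℝ) : EReal)) (𝓝[>] r₀) = ⊤ := by
  by_contra h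
  obtain ⟨M, hM⟩ := exists_eventually_le_of_limsup_coe_ne_top h
  obtain ⟨s, hs, hsub⟩ := mem_nhdsGT_iff_exists_Ioo_subset.mp
    (hM.and ((hA.eventually_ge_atTop 0).and (Ioo_mem_nhdsGT hr₁)))
  have hJ : Ioo r₀ (min s r₁) ⊆ Ioo r₀ s := Ioo_subset_Ioo_right (min_le_left s r₁)
  have hE : IsEYM Λ A w (Ioo r₀ (min s r₁)) :=
    hEYM.mono (Ioo_subset_Ioo_right (min_le_right s r₁))
  obtain ⟨W, hW⟩ := exists_norm_le_of_norm_deriv_le hE.2.1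
    (C := √M) fun r hr => Real.abs_le_sqrt (hsub (hJ hr)).1
  obtain ⟨K, hK⟩ := hE.exists_neg_mul_le_deriv hr₀ (fun r hr => (hsub (hJ hr)).2.1)
    (fun r hr => (hsub (hJ hr)).1) hW
  exact not_tendsto_atTop_of_neg_mul_le_deriv (lt_min hs hr₁) hE.1 hK hA
end

section
/- Let (A, w) be an EYM solution on (0, R) for some R > 0. Suppose there exist real numbers A₀ and A₁ such that 0 < A₀ < lim inf_{r → 0⁺} A(r), lim sup_{r → 0⁺} A(r) = A₁, and A₁ ≤ 1. Then w(r)² → 1 as r → 0⁺. -/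
open Filter Topology Set
open MeasureTheory

/-- pointwise AM-GM: `|x| ≤ x²/(2λ) + λ/2`. -/
lemma abs_le_sq_div_add (x lam : ℝ) (hl : 0 < lam) : |x| ≤ x ^ 2 / (2 * lam) + lam / 2 := by
  have h : 2 * lam * |x| ≤ x ^ 2 + lam * lam := by nlinarith [sq_nonneg (|x| - lam), sq_abs x]
  calc |x| = (2 * lam * |x|) / (2 * lam) := by field_simp
    _ ≤ (x ^ 2 + lam * lam) / (2 * lam) := by gcongr
    _ = x ^ 2 / (2 * lam) + lam / 2 := by field_simp

set_option maxHeartbeats 4000000 in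
/-- if `A` is bounded between a positive constant and `1` near the
origin, then `w² → 1` as `r → 0⁺`. -/
theorem stmt_9 (Λ R : ℝ) (A w : ℝ → ℝ) (hR : 0 < R)
    (hEYM : IsEYM Λ A w (Ioo 0 R)) (A₀ A₁ : ℝ)
    (hA₀pos : 0 < A₀)
    (hA₀ : (A₀ : EReal) < Filter.liminf (fun r => (A r : EReal)) (𝓝[>] 0))
    (hA₁ : Filter.limsup (fun r => (A r : EReal)) (𝓝[>] 0) = (A₁ : EReal))
    (hA₁le : A₁ ≤ 1) :
    Filter.Tendsto (fun r => (w r) ^ 2) (𝓝[>] 0) (𝓝 1) := by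
  obtain ⟨hAd, hwd, hw'd, heq1, -⟩ := hEYM
  -- `A₀ < A₁`
  have hA01 : A₀ < A₁ := by
    have h1 : (A₀ : EReal) < (A₁ : EReal) := by
      calc (A₀ : EReal) < Filter.liminf (fun r => (A r : EReal)) (𝓝[>] 0) := hA₀
        _ ≤ Filter.limsup (fun r => (A r : EReal)) (𝓝[>] 0) := Filter.liminf_le_limsup
        _ = (A₁ : EReal) := hA₁
    exact_mod_cast h1
  set B : ℝ := A₁ + 1 with hB
  -- eventual bounds on A near 0⁺
  have hev : ∀ᶠ r in 𝓝[>] (0:ℝ), A₀ ≤ A r ∧ A r ≤ B := by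
    have h1 : ∀ᶠ r in 𝓝[>] (0:ℝ), (A₀ : EReal) < (A r : EReal) :=
      Filter.eventually_lt_of_lt_liminf hA₀
    have h2 : ∀ᶠ r in 𝓝[>] (0:ℝ), (A r : EReal) < ((B : ℝ) : EReal) := by
      refine Filter.eventually_lt_of_limsup_lt ?_
      rw [hA₁]
      exact_mod_cast (lt_add_one A₁)
    filter_upwards [h1, h2] with r hr1 hr2
    constructor
    · exact le_of_lt (by exact_mod_cast hr1)
    · exact le_of_lt (by exact_mod_cast hr2)
  obtain ⟨u, hu0, huIoc⟩ := mem_nhdsGT_iff_exists_Ioc_subset.mp hev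
  -- choose r₀
  set r₀ : ℝ := min u (R / 2) with hr₀def
  have hr₀pos : 0 < r₀ := lt_min hu0 (by linarith)
  have hr₀R : r₀ < R := lt_of_le_of_lt (min_le_right _ _) (by linarith)
  have hbound : ∀ r ∈ Ioc (0:ℝ) r₀, A₀ ≤ A r ∧ A r ≤ B := by
    intro r hr
    exact huIoc ⟨hr.1, le_trans hr.2 (min_le_left _ _)⟩
  have hIsub : Ioc (0:ℝ) r₀ ⊆ Ioo 0 R := fun r hr => ⟨hr.1, lt_of_le_of_lt hr.2 hr₀R⟩
  -- constants
  set C : ℝ := 1 - A₀ + |Λ| * r₀ ^ 2 with hC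
  have hCpos : 0 < C := by
    have : 0 ≤ |Λ| * r₀ ^ 2 := by positivity
    have hA₀1 : A₀ < 1 := lt_of_lt_of_le hA01 hA₁le
    linarith
  set K : ℝ := C + B - A₀ with hK
  have hKpos : 0 < K := by linarith
  set μ : ℝ := Real.sqrt (K / A₀) with hμ
  have hμpos : 0 < μ := Real.sqrt_pos.mpr (by positivity)
  have hμsq : μ ^ 2 = K / A₀ := Real.sq_sqrt (by positivity)
  -- continuity facts on Ioo 0 R
  have hwc : ContinuousOn w (Ioo 0 R) := fun r hr => (hwd r hr).continuousAt.continuousWithinAt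
  have hw'c : ContinuousOn (deriv w) (Ioo 0 R) :=
    fun r hr => (hw'd r hr).continuousAt.continuousWithinAt
  have hAc : ContinuousOn A (Ioo 0 R) := fun r hr => (hAd r hr).continuousAt.continuousWithinAt
  have hA'eq : ∀ r ∈ Ioo (0:ℝ) R, deriv A r =
      (1 - A r - Λ * r ^ 2) / r - (2 * A r * (deriv w r) ^ 2 / r
        + (1 - (w r) ^ 2) ^ 2 / r ^ 3) := by
    intro r hr
    have h := heq1 r hr
    have hr0 : (r:ℝ) ≠ 0 := ne_of_gt hr.1
    rw [Phi] at h
    field_simp at h ⊢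
    ring_nf at h ⊢
    nlinarith [h]
  have hA'c : ContinuousOn (deriv A) (Ioo 0 R) := by
    have hcont : ContinuousOn (fun r => (1 - A r - Λ * r ^ 2) / r
        - (2 * A r * (deriv w r) ^ 2 / r + (1 - (w r) ^ 2) ^ 2 / r ^ 3)) (Ioo 0 R) := by
      apply ContinuousOn.sub
      · exact ((continuousOn_const.sub hAc).sub
          (continuousOn_const.mul ((continuous_pow 2).continuousOn))).div
          continuousOn_id (fun r hr => ne_of_gt hr.1)
      · apply ContinuousOn.add
        · exact ((continuousOn_const.mul hAc).mul (hw'c.pow 2)).div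
            continuousOn_id (fun r hr => ne_of_gt hr.1)
        · exact ((continuousOn_const.sub (hwc.pow 2)).pow 2).div
            ((continuous_pow 3).continuousOn) (fun r hr => pow_ne_zero 3 (ne_of_gt hr.1))
    exact ContinuousOn.congr hcont hA'eq
  -- the key integral bound
  set g : ℝ → ℝ := fun s => 2 * A s * (deriv w s) ^ 2 / s + (1 - (w s) ^ 2) ^ 2 / s ^ 3
    with hgdef
  have hgc : ContinuousOn g (Ioo 0 R) := by
    apply ContinuousOn.add
    · exact ((continuousOn_const.mul hAc).mul (hw'c.pow 2)).div
        continuousOn_id (fun r hr => ne_of_gt hr.1)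
    · exact ((continuousOn_const.sub (hwc.pow 2)).pow 2).div
        ((continuous_pow 3).continuousOn) (fun r hr => pow_ne_zero 3 (ne_of_gt hr.1))
  have keyg : ∀ a : ℝ, 0 < a → 2 * a ≤ r₀ → (∫ s in a..(2*a), g s) ≤ K := by
    intro a ha h2a
    have ha2 : a ≤ 2 * a := by linarith
    have hsub : Icc a (2*a) ⊆ Ioc 0 r₀ := fun s hs => ⟨lt_of_lt_of_le ha hs.1, le_trans hs.2 h2a⟩
    have hsub' : Icc a (2*a) ⊆ Ioo 0 R := fun s hs => hIsub (hsub hs)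
    have hgint : IntervalIntegrable g volume a (2*a) :=
      (hgc.mono hsub').intervalIntegrable_of_Icc ha2
    have hFint : IntervalIntegrable (fun s => (1 - A s - Λ * s ^ 2) / s) volume a (2*a) := by
      refine (ContinuousOn.intervalIntegrable_of_Icc ha2 ?_)
      exact (((continuousOn_const.sub (hAc.mono hsub')).sub
        (continuousOn_const.mul ((continuous_pow 2).continuousOn))).div
        continuousOn_id (fun r hr => ne_of_gt (hsub' hr).1))
    -- FTC
    have hftc : (∫ s in a..(2*a), deriv A s) = A (2*a) - A a := by
      refine intervalIntegral.integral_eq_sub_of_hasDerivAt (fun x hx => ?_) ?_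
      · exact (hAd x (hsub' ((uIcc_of_le ha2) ▸ hx))).hasDerivAt
      · exact ((hA'c.mono hsub').intervalIntegrable_of_Icc ha2)
    have heqsplit : (∫ s in a..(2*a), deriv A s)
        = (∫ s in a..(2*a), (1 - A s - Λ * s ^ 2) / s) - ∫ s in a..(2*a), g s := by
      rw [← intervalIntegral.integral_sub hFint hgint]
      refine intervalIntegral.integral_congr (fun x hx => ?_)
      exact hA'eq x (hsub' ((uIcc_of_le ha2) ▸ hx))
    have hCint : (∫ s in a..(2*a), (1 - A s - Λ * s ^ 2) / s) ≤ C := by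
      have hmono : (∫ s in a..(2*a), (1 - A s - Λ * s ^ 2) / s)
          ≤ ∫ _s in a..(2*a), C / a := by
        refine intervalIntegral.integral_mono_on ha2 hFint
          (intervalIntegrable_const) (fun x hx => ?_)
        have hx0 : 0 < x := lt_of_lt_of_le ha hx.1
        have hb := hbound x (hsub hx)
        have hnum : 1 - A x - Λ * x ^ 2 ≤ C := by
          have h1 : -Λ * x ^ 2 ≤ |Λ| * r₀ ^ 2 := by
            have : |Λ * x ^ 2| ≤ |Λ| * r₀ ^ 2 := by
              rw [abs_mul, abs_of_nonneg (sq_nonneg x)]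
              have hxr : x ≤ r₀ := (hsub hx).2
              exact mul_le_mul_of_nonneg_left (by nlinarith) (abs_nonneg Λ)
            nlinarith [neg_le_abs (Λ * x ^ 2)]
          linarith
        have hcx : (1 - A x - Λ * x ^ 2) / x ≤ C / x := by gcongr
        have hcxa : C / x ≤ C / a := div_le_div_of_nonneg_left hCpos.le ha hx.1
        linarith
      have hc2 : (∫ _s in a..(2*a), C / a) = C := by
        rw [intervalIntegral.integral_const, smul_eq_mul]
        field_simp
        ring
      linarith [hmono, hc2]
    have hAB : A (2*a) - A a ≥ A₀ - B := by
      have h1 := hbound (2*a) ⟨by linarith, h2a⟩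
      have h2 := hbound a (hsub ⟨le_refl a, ha2⟩)
      linarith [h1.1, h1.2, h2.1, h2.2]
    have : (∫ s in a..(2*a), g s)
        = (∫ s in a..(2*a), (1 - A s - Λ * s ^ 2) / s) - (A (2*a) - A a) := by
      rw [← hftc, heqsplit]; ring
    rw [this]
    linarith
  -- bounds for the two separate integrals
  have keyw' : ∀ a : ℝ, 0 < a → 2 * a ≤ r₀ →
      (∫ s in a..(2*a), (deriv w s) ^ 2) ≤ a / A₀ * K := by
    intro a ha h2a
    have ha2 : a ≤ 2 * a := by linarith
    have hsub : Icc a (2*a) ⊆ Ioc 0 r₀ := fun s hs => ⟨lt_of_lt_of_le ha hs.1, le_trans hs.2 h2a⟩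
    have hsub' : Icc a (2*a) ⊆ Ioo 0 R := fun s hs => hIsub (hsub hs)
    have hgint : IntervalIntegrable g volume a (2*a) :=
      (hgc.mono hsub').intervalIntegrable_of_Icc ha2
    have hw2int : IntervalIntegrable (fun s => (deriv w s) ^ 2) volume a (2*a) :=
      (((hw'c.mono hsub').pow 2)).intervalIntegrable_of_Icc ha2
    have hmono : (∫ s in a..(2*a), (deriv w s) ^ 2) ≤ ∫ s in a..(2*a), a / A₀ * g s := by
      refine intervalIntegral.integral_mono_on ha2 hw2int (hgint.const_mul _) (fun x hx => ?_)
      have hx0 : 0 < x := lt_of_lt_of_le ha hx.1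
      have hAx : A₀ ≤ A x := (hbound x (hsub hx)).1
      set d : ℝ := deriv w x with hd
      have h1 : A₀ * d ^ 2 / a ≤ 2 * A x * d ^ 2 / x := by
        rw [div_le_div_iff₀ ha hx0]
        have e1 : A₀ * d ^ 2 * x ≤ A₀ * d ^ 2 * (2 * a) :=
          mul_le_mul_of_nonneg_left hx.2 (mul_nonneg hA₀pos.le (sq_nonneg d))
        have e2 : A₀ * (d ^ 2 * (2 * a)) ≤ A x * (d ^ 2 * (2 * a)) :=
          mul_le_mul_of_nonneg_right hAx (by positivity)
        have e3 : A₀ * d ^ 2 * (2 * a) = A₀ * (d ^ 2 * (2 * a)) := by ring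
        have e4 : A x * (d ^ 2 * (2 * a)) = 2 * A x * d ^ 2 * a := by ring
        linarith
      have h2 : (0:ℝ) ≤ (1 - (w x) ^ 2) ^ 2 / x ^ 3 := by positivity
      have h3 : A₀ * d ^ 2 / a ≤ g x := by
        simp only [hgdef]; linarith
      have h4 : d ^ 2 = a / A₀ * (A₀ * d ^ 2 / a) := by
        field_simp
      rw [h4]
      exact mul_le_mul_of_nonneg_left h3 (by positivity)
    have h5 : (∫ s in a..(2*a), a / A₀ * g s) = a / A₀ * ∫ s in a..(2*a), g s := by
      exact intervalIntegral.integral_const_mul _ _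
    have h6 := keyg a ha h2a
    have h7 : a / A₀ * (∫ s in a..(2*a), g s) ≤ a / A₀ * K :=
      mul_le_mul_of_nonneg_left h6 (by positivity)
    linarith [hmono, h5 ▸ hmono, h7]
  have keyu : ∀ a : ℝ, 0 < a → 2 * a ≤ r₀ →
      (∫ s in a..(2*a), (1 - (w s) ^ 2) ^ 2) ≤ 8 * a ^ 3 * K := by
    intro a ha h2a
    have ha2 : a ≤ 2 * a := by linarith
    have hsub : Icc a (2*a) ⊆ Ioc 0 r₀ := fun s hs => ⟨lt_of_lt_of_le ha hs.1, le_trans hs.2 h2a⟩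
    have hsub' : Icc a (2*a) ⊆ Ioo 0 R := fun s hs => hIsub (hsub hs)
    have hgint : IntervalIntegrable g volume a (2*a) :=
      (hgc.mono hsub').intervalIntegrable_of_Icc ha2
    have huint : IntervalIntegrable (fun s => (1 - (w s) ^ 2) ^ 2) volume a (2*a) :=
      ((continuousOn_const.sub ((hwc.mono hsub').pow 2)).pow 2).intervalIntegrable_of_Icc ha2
    have hmono : (∫ s in a..(2*a), (1 - (w s) ^ 2) ^ 2)
        ≤ ∫ s in a..(2*a), 8 * a ^ 3 * g s := by
      refine intervalIntegral.integral_mono_on ha2 huint (hgint.const_mul _) (fun x hx => ?_)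
      have hx0 : 0 < x := lt_of_lt_of_le ha hx.1
      have hAx : A₀ ≤ A x := (hbound x (hsub hx)).1
      have hA0x : 0 < A x := lt_of_lt_of_le hA₀pos hAx
      have h2 : (0:ℝ) ≤ 2 * A x * (deriv w x) ^ 2 / x := by positivity
      have h3 : (1 - (w x) ^ 2) ^ 2 / x ^ 3 ≤ g x := by
        simp only [hgdef]; linarith
      have hx3 : x ^ 3 ≤ 8 * a ^ 3 := by
        calc x ^ 3 ≤ (2 * a) ^ 3 := by
              exact pow_le_pow_left₀ hx0.le hx.2 3
          _ = 8 * a ^ 3 := by ring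
      have h4 : (1 - (w x) ^ 2) ^ 2 = x ^ 3 * ((1 - (w x) ^ 2) ^ 2 / x ^ 3) := by
        field_simp
      rw [h4]
      calc x ^ 3 * ((1 - (w x) ^ 2) ^ 2 / x ^ 3)
          ≤ 8 * a ^ 3 * ((1 - (w x) ^ 2) ^ 2 / x ^ 3) :=
            mul_le_mul_of_nonneg_right hx3 (by positivity)
        _ ≤ 8 * a ^ 3 * g x := mul_le_mul_of_nonneg_left h3 (by positivity)
    have h5 : (∫ s in a..(2*a), 8 * a ^ 3 * g s) = 8 * a ^ 3 * ∫ s in a..(2*a), g s :=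
      intervalIntegral.integral_const_mul _ _
    have h7 : 8 * a ^ 3 * (∫ s in a..(2*a), g s) ≤ 8 * a ^ 3 * K :=
      mul_le_mul_of_nonneg_left (keyg a ha h2a) (by positivity)
    linarith [hmono, h5 ▸ hmono, h7]
  -- bound on the integral of |w'|
  have keyabs : ∀ a : ℝ, 0 < a → 2 * a ≤ r₀ →
      (∫ s in a..(2*a), |deriv w s|) ≤ μ * a := by
    intro a ha h2a
    have ha2 : a ≤ 2 * a := by linarith
    have hsub' : Icc a (2*a) ⊆ Ioo 0 R := fun s hs =>
      hIsub ⟨lt_of_lt_of_le ha hs.1, le_trans hs.2 h2a⟩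
    have hw2int : IntervalIntegrable (fun s => (deriv w s) ^ 2) volume a (2*a) :=
      (((hw'c.mono hsub').pow 2)).intervalIntegrable_of_Icc ha2
    have habsint : IntervalIntegrable (fun s => |deriv w s|) volume a (2*a) :=
      ((hw'c.mono hsub').abs).intervalIntegrable_of_Icc ha2
    have hmono : (∫ s in a..(2*a), |deriv w s|)
        ≤ ∫ s in a..(2*a), ((deriv w s) ^ 2 / (2 * μ) + μ / 2) := by
      refine intervalIntegral.integral_mono_on ha2 habsint
        ((hw2int.div_const _).add intervalIntegrable_const) (fun x _ => ?_)
      exact abs_le_sq_div_add _ _ hμpos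
    have hsplit : (∫ s in a..(2*a), ((deriv w s) ^ 2 / (2 * μ) + μ / 2))
        = (∫ s in a..(2*a), (deriv w s) ^ 2) / (2 * μ) + (2*a - a) * (μ / 2) := by
      rw [intervalIntegral.integral_add (hw2int.div_const _) intervalIntegrable_const,
        intervalIntegral.integral_div, intervalIntegral.integral_const, smul_eq_mul]
    have h6 : (∫ s in a..(2*a), (deriv w s) ^ 2) / (2 * μ) ≤ (a / A₀ * K) / (2 * μ) := by
      have := keyw' a ha h2a
      gcongr
    have h7 : (a / A₀ * K) / (2 * μ) = μ * a / 2 := by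
      have hKA : K / A₀ = μ ^ 2 := hμsq.symm
      have : a / A₀ * K = a * (K / A₀) := by ring
      rw [this, hKA]
      field_simp
    calc (∫ s in a..(2*a), |deriv w s|)
        ≤ (∫ s in a..(2*a), (deriv w s) ^ 2) / (2 * μ) + (2*a - a) * (μ / 2) := by
          rw [← hsplit]; exact hmono
      _ ≤ (a / A₀ * K) / (2 * μ) + (2*a - a) * (μ / 2) := by linarith
      _ = μ * a := by rw [h7]; ring
  -- the small constant a₀
  set D : ℝ := Real.sqrt (8 * K) + 4 * μ with hD
  have hDpos : 0 < D := by
    have : 0 ≤ Real.sqrt (8 * K) := Real.sqrt_nonneg _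
    simp only [hD]; linarith
  set a₀ : ℝ := min (r₀ / 2) (1 / D) with ha₀def
  have ha₀pos : 0 < a₀ := lt_min (by linarith) (by positivity)
  -- main pointwise estimate
  have main : ∀ a : ℝ, 0 < a → a ≤ a₀ → ∀ r ∈ Icc a (2*a), |1 - (w r) ^ 2| ≤ D * a := by
    intro a ha ha0 r hr
    have h2a : 2 * a ≤ r₀ := by
      have := le_trans ha0 (min_le_left (r₀/2) (1/D)); linarith
    have haD : a ≤ 1 / D := le_trans ha0 (min_le_right _ _)
    have hsqa : Real.sqrt (8 * K) * a ≤ 1 := by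
      have h1 : Real.sqrt (8 * K) * a ≤ Real.sqrt (8 * K) * (1 / D) :=
        mul_le_mul_of_nonneg_left haD (Real.sqrt_nonneg _)
      have h2 : Real.sqrt (8 * K) * (1 / D) ≤ 1 := by
        rw [mul_one_div, div_le_one hDpos]
        simp only [hD]; nlinarith
      linarith
    have hμa : μ * a ≤ 1 / 4 := by
      have h1 : μ * a ≤ μ * (1 / D) := mul_le_mul_of_nonneg_left haD hμpos.le
      have h2 : μ * (1 / D) ≤ 1 / 4 := by
        rw [mul_one_div, div_le_div_iff₀ hDpos (by norm_num)]
        have : 0 ≤ Real.sqrt (8 * K) := Real.sqrt_nonneg _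
        simp only [hD]; nlinarith
      linarith
    have ha2 : a ≤ 2 * a := by linarith
    have hsub : Icc a (2*a) ⊆ Ioc 0 r₀ := fun s hs => ⟨lt_of_lt_of_le ha hs.1, le_trans hs.2 h2a⟩
    have hsub' : Icc a (2*a) ⊆ Ioo 0 R := fun s hs => hIsub (hsub hs)
    -- find a point where 1 - w² is small
    have ht : ∃ t ∈ Icc a (2*a), (1 - (w t) ^ 2) ^ 2 ≤ 8 * K * a ^ 2 := by
      by_contra hcon
      push_neg at hcon
      have huint : IntervalIntegrable (fun s => (1 - (w s) ^ 2) ^ 2 - 8 * K * a ^ 2)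
          volume a (2*a) :=
        (((continuousOn_const.sub ((hwc.mono hsub').pow 2)).pow 2).sub
          continuousOn_const).intervalIntegrable_of_Icc ha2
      have hpos : 0 < ∫ s in a..(2*a), ((1 - (w s) ^ 2) ^ 2 - 8 * K * a ^ 2) := by
        refine intervalIntegral.intervalIntegral_pos_of_pos_on huint (fun x hx => ?_)
          (by linarith)
        have := hcon x ⟨hx.1.le, hx.2.le⟩
        linarith
      have huint2 : IntervalIntegrable (fun s => (1 - (w s) ^ 2) ^ 2) volume a (2*a) :=
        ((continuousOn_const.sub ((hwc.mono hsub').pow 2)).pow 2).intervalIntegrable_of_Icc ha2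
      rw [intervalIntegral.integral_sub huint2 intervalIntegrable_const,
        intervalIntegral.integral_const, smul_eq_mul] at hpos
      have := keyu a ha h2a
      nlinarith
    obtain ⟨t, htmem, htsmall⟩ := ht
    have htu : |1 - (w t) ^ 2| ≤ Real.sqrt (8 * K) * a := by
      rw [← Real.sqrt_sq_eq_abs]
      calc Real.sqrt ((1 - (w t) ^ 2) ^ 2) ≤ Real.sqrt (8 * K * a ^ 2) :=
            Real.sqrt_le_sqrt htsmall
        _ = Real.sqrt (8 * K) * a := by
            rw [show 8 * K * a ^ 2 = 8 * K * a ^ 2 from rfl, Real.sqrt_mul (by positivity) (a^2),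
              Real.sqrt_sq ha.le]
    -- the maximum of |w| on [a, 2a]
    obtain ⟨sstar, hsmem, hsmax⟩ := isCompact_Icc.exists_isMaxOn (nonempty_Icc.mpr ha2)
      ((hwc.mono hsub').abs)
    set M : ℝ := |w sstar| with hM
    have hMnonneg : 0 ≤ M := abs_nonneg _
    have hMbound : ∀ x ∈ Icc a (2*a), |w x| ≤ M := fun x hx => hsmax hx
    -- difference estimate
    have habsint : IntervalIntegrable (fun s => |deriv w s|) volume a (2*a) :=
      ((hw'c.mono hsub').abs).intervalIntegrable_of_Icc ha2
    have hdiff : ∀ p ∈ Icc a (2*a), ∀ q ∈ Icc a (2*a), p ≤ q →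
        |(w q) ^ 2 - (w p) ^ 2| ≤ 2 * M * (μ * a) := by
      intro p hp q hq hpq
      have hsubpq : Icc p q ⊆ Icc a (2*a) := Icc_subset_Icc hp.1 hq.2
      have hsubpq' : Icc p q ⊆ Ioo 0 R := fun x hx => hsub' (hsubpq hx)
      have hint1 : IntervalIntegrable (fun x => 2 * w x * deriv w x) volume p q :=
        (((continuousOn_const.mul (hwc.mono hsubpq')).mul
          (hw'c.mono hsubpq'))).intervalIntegrable_of_Icc hpq
      have hint2 : IntervalIntegrable (fun x => |2 * w x * deriv w x|) volume p q :=
        ((((continuousOn_const.mul (hwc.mono hsubpq')).mul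
          (hw'c.mono hsubpq'))).abs).intervalIntegrable_of_Icc hpq
      have hftcw : (∫ x in p..q, 2 * w x * deriv w x) = (w q) ^ 2 - (w p) ^ 2 := by
        refine intervalIntegral.integral_eq_sub_of_hasDerivAt
          (f := fun y => (w y) ^ 2) (fun x hx => ?_) hint1
        have hx' : x ∈ Ioo 0 R := hsubpq' ((uIcc_of_le hpq) ▸ hx)
        have h := ((hwd x hx').hasDerivAt).pow 2
        norm_num at h
        exact h
      have step1 : |(w q) ^ 2 - (w p) ^ 2| ≤ ∫ x in p..q, |2 * w x * deriv w x| := by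
        rw [← hftcw]
        exact intervalIntegral.abs_integral_le_integral_abs hpq
      have step2 : (∫ x in p..q, |2 * w x * deriv w x|)
          ≤ ∫ x in p..q, 2 * M * |deriv w x| := by
        refine intervalIntegral.integral_mono_on hpq hint2 ?_ (fun x hx => ?_)
        · exact (((hw'c.mono hsubpq').abs).intervalIntegrable_of_Icc hpq).const_mul _
        · rw [abs_mul, abs_mul, abs_two]
          have h1 : |w x| ≤ M := hMbound x (hsubpq hx)
          have h2 : (0:ℝ) ≤ |deriv w x| := abs_nonneg _
          nlinarith [abs_nonneg (w x)]
      have step3 : (∫ x in p..q, 2 * M * |deriv w x|)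
          ≤ ∫ x in a..(2*a), 2 * M * |deriv w x| := by
        refine intervalIntegral.integral_mono_interval hp.1 hpq hq.2 ?_
          (habsint.const_mul _)
        filter_upwards with x
        positivity
      have step4 : (∫ x in a..(2*a), 2 * M * |deriv w x|)
          = 2 * M * ∫ x in a..(2*a), |deriv w x| :=
        intervalIntegral.integral_const_mul _ _
      have step5 : 2 * M * (∫ x in a..(2*a), |deriv w x|) ≤ 2 * M * (μ * a) := by
        have h := keyabs a ha h2a
        have : (0:ℝ) ≤ 2 * M := by linarith
        calc 2 * M * (∫ x in a..(2*a), |deriv w x|) ≤ 2 * M * (μ * a) :=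
          mul_le_mul_of_nonneg_left (by linarith [h]) this
        _ = 2 * M * (μ * a) := rfl
      linarith [step1, step2, step3, step4 ▸ step3, step5]
    -- bound M ≤ 2
    have hMle : M ≤ 2 := by
      have h1 : M ^ 2 = (w sstar) ^ 2 := by rw [hM, sq_abs]
      have h2 : |(w sstar) ^ 2 - (w t) ^ 2| ≤ 2 * M * (μ * a) := by
        rcases le_total sstar t with h | h
        · rw [abs_sub_comm]; exact hdiff sstar hsmem t htmem h
        · exact hdiff t htmem sstar hsmem h
      have h3 : (w sstar) ^ 2 ≤ 1 + |1 - (w t) ^ 2| + |(w sstar) ^ 2 - (w t) ^ 2| := by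
        linarith [neg_abs_le (1 - (w t) ^ 2), le_abs_self ((w sstar) ^ 2 - (w t) ^ 2)]
      have h4 : M ^ 2 ≤ 2 + M / 2 := by
        have := htu
        have hμaM : 2 * M * (μ * a) ≤ M / 2 := by nlinarith [hμa, hMnonneg]
        nlinarith [h1, h2, h3, hsqa]
      nlinarith [hMnonneg, h4]
    -- conclude
    have h5 : |(w r) ^ 2 - (w t) ^ 2| ≤ 2 * M * (μ * a) := by
      rcases le_total r t with h | h
      · rw [abs_sub_comm]; exact hdiff r hr t htmem h
      · exact hdiff t htmem r hr h
    have h6 : |1 - (w r) ^ 2| ≤ |1 - (w t) ^ 2| + |(w r) ^ 2 - (w t) ^ 2| := by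
      have : (1 - (w r) ^ 2) = (1 - (w t) ^ 2) - ((w r) ^ 2 - (w t) ^ 2) := by ring
      rw [this]
      exact abs_sub _ _
    have h7 : 2 * M * (μ * a) ≤ 4 * (μ * a) := by
      have : (0:ℝ) ≤ μ * a := by positivity
      nlinarith [hMle]
    calc |1 - (w r) ^ 2| ≤ Real.sqrt (8 * K) * a + 2 * M * (μ * a) := by
          linarith [h6, htu, h5]
      _ ≤ Real.sqrt (8 * K) * a + 4 * μ * a := by linarith [h7]
      _ = D * a := by rw [hD]; ring
  -- conclude the limit
  have hev2 : ∀ᶠ r in 𝓝[>] (0:ℝ), ‖1 - (w r) ^ 2‖ ≤ D * r := by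
    have hmem : Ioc (0:ℝ) a₀ ∈ 𝓝[>] (0:ℝ) := Ioc_mem_nhdsGT_of_mem ⟨le_refl 0, ha₀pos⟩
    filter_upwards [hmem] with r hrm
    have := main r hrm.1 hrm.2 r ⟨le_refl r, by linarith [hrm.1]⟩
    simpa [Real.norm_eq_abs] using this
  have hDr : Tendsto (fun r : ℝ => D * r) (𝓝[>] (0:ℝ)) (𝓝 0) := by
    have : Tendsto (fun r : ℝ => D * r) (𝓝 (0:ℝ)) (𝓝 (D * 0)) :=
      (continuous_const.mul continuous_id).tendsto 0
    rw [mul_zero] at this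
    exact this.mono_left nhdsWithin_le_nhds
  have h0 : Tendsto (fun r => 1 - (w r) ^ 2) (𝓝[>] (0:ℝ)) (𝓝 0) :=
    squeeze_zero_norm' hev2 hDr
  have h1 : Tendsto (fun r => 1 - (1 - (w r) ^ 2)) (𝓝[>] (0:ℝ)) (𝓝 (1 - 0)) :=
    tendsto_const_nhds.sub h0
  rw [sub_zero] at h1
  exact h1.congr (fun r => by ring)
end

section
/- Let (A, w) be an EYM solution on (0, R) for some R > 0 such that 0 < A(r) ≤ 1 for all r ∈ (0, R), w(r) → 1 as r → 0⁺, and for all r ∈ (0, R) one has w(r) < 1 and w'(r) < 0. Then there exists r₀ ∈ (0, R), independent of ε, such that for every ε > 0 and every b ∈ (0, r₀): if 1 − ε·b ≤ w(b), then 1 − ε·r ≤ w(r) < 1 for all r ∈ (0, b). -/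
/-!
Put `f r = w r - 1 + ε r`, so that `f → 0` at `0⁺` and `f b ≥ 0`. If `f` were negative
somewhere in `(0, b)`, it would attain a negative minimum at an interior point `c`, where
`w' c = -ε` and `w'' c ≥ 0`. But `Φ < 1 + |Λ| r²` while `w (1 + w) → 2` as `r → 0⁺`, so for
small `c` the Yang–Mills equation `c² A w'' = ε c Φ - w (1 + w) (1 - w)` together with
`ε c < 1 - w c` forces `w'' c < 0`.
-/

open Filter Topology Set

theorem IsLocalMin.deriv_deriv_nonneg {f : ℝ → ℝ} {c : ℝ} (hmin : IsLocalMin f c)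
    (hcont : ContinuousAt f c) : 0 ≤ deriv (deriv f) c := by
  by_contra! hneg
  have hmax := isLocalMax_of_deriv_deriv_neg hneg hmin.deriv_eq_zero hcont
  have hconst : f =ᶠ[𝓝 c] fun _ => f c :=
    (hmin.and hmax).mono fun x hx => le_antisymm hx.2 hx.1
  have hderiv : deriv f =ᶠ[𝓝 c] fun _ => 0 :=
    hconst.eventuallyEq_nhds.mono fun x hx => by rw [hx.deriv_eq, deriv_const]
  rw [hderiv.deriv_eq, deriv_const] at hneg
  exact lt_irrefl 0 hneg

theorem nonneg_of_forall_not_isLocalMin {f : ℝ → ℝ} {a b : ℝ}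
    (hf : ContinuousOn f (Ioc a b)) (ha : Tendsto f (𝓝[>] a) (𝓝 0)) (hb : 0 ≤ f b)
    (hmin : ∀ c ∈ Ioo a b, f c < 0 → ¬ IsLocalMin f c) :
    ∀ r ∈ Ioo a b, 0 ≤ f r := by
  rintro r ⟨har, hrb⟩
  by_contra! hr
  obtain ⟨u, hau, hu⟩ :=
    mem_nhdsGT_iff_exists_Ioo_subset.1 (ha.eventually (eventually_gt_nhds hr))
  set a' := min ((a + u) / 2) ((a + r) / 2)
  have ha' : a' ∈ Ioo a u := ⟨lt_min (by linarith [mem_Ioi.1 hau]) (by linarith),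
    (min_le_left _ _).trans_lt (by linarith [mem_Ioi.1 hau])⟩
  have ha'r : a' < r := (min_le_right _ _).trans_lt (by linarith)
  have hfa' : f r < f a' := hu ha'
  obtain ⟨c, hc, hcmin⟩ := isCompact_Icc.exists_isMinOn (nonempty_Icc.2 (ha'r.trans hrb).le)
    (hf.mono (Icc_subset_Ioc ha'.1 le_rfl))
  have hcr : f c ≤ f r := hcmin ⟨ha'r.le, hrb.le⟩
  have ha'c : a' < c := hc.1.lt_of_ne (by rintro rfl; linarith)
  have hcb : c < b := hc.2.lt_of_ne (by rintro rfl; linarith)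
  exact hmin c ⟨ha'.1.trans ha'c, hcb⟩ (hcr.trans_lt hr)
    (hcmin.isLocalMin (Icc_mem_nhds ha'c hcb))

section EYM

variable {Λ : ℝ} {A w : ℝ → ℝ}

theorem Phi_lt_of_pos {r : ℝ} (hA : 0 < A r) : Phi Λ A w r < 1 + |Λ| * r ^ 2 := by
  have hYM : 0 ≤ (1 - w r ^ 2) ^ 2 / r ^ 2 := by positivity
  have hΛ : -(|Λ| * r ^ 2) ≤ Λ * r ^ 2 := by
    simpa using mul_le_mul_of_nonneg_right (neg_abs_le Λ) (sq_nonneg r)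
  unfold Phi
  linarith

theorem eventually_one_add_abs_mul_sq_lt (hwlim : Tendsto w (𝓝[>] 0) (𝓝 1)) :
    ∀ᶠ r in 𝓝[>] 0, 1 + |Λ| * r ^ 2 < w r * (1 + w r) := by
  have hsq : Tendsto (fun r : ℝ => |Λ| * r ^ 2) (𝓝[>] 0) (𝓝 (|Λ| * 0 ^ 2)) :=
    ((continuous_const.mul (continuous_pow 2)).tendsto 0).mono_left nhdsWithin_le_nhds
  have hlim := (hwlim.mul ((tendsto_const_nhds (x := (1 : ℝ))).add hwlim)).sub hsq
  norm_num at hlim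
  filter_upwards [hlim.eventually (eventually_gt_nhds one_lt_two)] with r hr
  linarith

theorem deriv_deriv_neg_of_deriv_eq_neg {c ε : ℝ} (hc : 0 < c) (hε : 0 < ε) (hA : 0 < A c)
    (hode : c ^ 2 * A c * deriv (deriv w) c + c * Phi Λ A w c * deriv w c
      + w c * (1 - w c ^ 2) = 0)
    (hw' : deriv w c = -ε) (hbelow : w c - 1 + ε * c < 0)
    (hgap : 1 + |Λ| * c ^ 2 < w c * (1 + w c)) :
    deriv (deriv w) c < 0 := by
  have hΦ := Phi_lt_of_pos (Λ := Λ) (w := w) hA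
  have hεc : 0 < ε * c := mul_pos hε hc
  have hp : 0 < w c * (1 + w c) := by nlinarith [abs_nonneg Λ, sq_nonneg c]
  have key : c ^ 2 * A c * deriv (deriv w) c < 0 := by
    rw [hw'] at hode
    nlinarith [mul_lt_mul_of_pos_left (hΦ.trans hgap) hεc,
      mul_lt_mul_of_pos_left (show ε * c < 1 - w c by linarith) hp]
  exact neg_of_mul_neg_right key (by positivity)

theorem not_isLocalMin_sub_line {R c ε : ℝ} (hEYM : IsEYM Λ A w (Ioo 0 R))
    (hc : c ∈ Ioo 0 R) (hA : 0 < A c) (hε : 0 < ε)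
    (hgap : 1 + |Λ| * c ^ 2 < w c * (1 + w c)) (hbelow : w c - 1 + ε * c < 0) :
    ¬ IsLocalMin (fun r => w r - 1 + ε * r) c := by
  obtain ⟨-, hdw, -, -, hode⟩ := hEYM
  intro hmin
  have hderiv : ∀ x ∈ Ioo 0 R, HasDerivAt (fun r => w r - 1 + ε * r) (deriv w x + ε) x :=
    fun x hx => ((hdw x hx).hasDerivAt.sub_const 1).add
      (by simpa using (hasDerivAt_id x).const_mul ε)
  have hderiv_eq : deriv (fun r => w r - 1 + ε * r) =ᶠ[𝓝 c] fun x => deriv w x + ε :=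
    eventually_of_mem (Ioo_mem_nhds hc.1 hc.2) fun x hx => (hderiv x hx).deriv
  have hw' : deriv w c = -ε := by
    have := hmin.deriv_eq_zero
    rw [hderiv_eq.eq_of_nhds] at this
    linarith
  have hconvex := hmin.deriv_deriv_nonneg (hderiv c hc).continuousAt
  rw [hderiv_eq.deriv_eq, deriv_add_const] at hconvex
  exact (deriv_deriv_neg_of_deriv_eq_neg hc.1 hε hA (hode c hc) hw' hbelow hgap).not_ge hconvex

end EYM

/-- comparison of `w` with the lines `1 − ε r` (Lemma on ε). -/
theorem stmt_10 (Λ R : ℝ) (A w : ℝ → ℝ) (hR : 0 < R)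
    (hEYM : IsEYM Λ A w (Ioo 0 R))
    (hA : ∀ r ∈ Ioo (0 : ℝ) R, 0 < A r ∧ A r ≤ 1)
    (hwlim : Filter.Tendsto w (𝓝[>] 0) (𝓝 1))
    (hw : ∀ r ∈ Ioo (0 : ℝ) R, w r < 1 ∧ deriv w r < 0) :
    ∃ r₀ ∈ Ioo (0 : ℝ) R, ∀ ε : ℝ, 0 < ε → ∀ b ∈ Ioo (0 : ℝ) r₀,
      1 - ε * b ≤ w b →
      ∀ r ∈ Ioo (0 : ℝ) b, 1 - ε * r ≤ w r ∧ w r < 1 := by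
  obtain ⟨δ, hδ, hgap⟩ :=
    mem_nhdsGT_iff_exists_Ioo_subset.1 (eventually_one_add_abs_mul_sq_lt (Λ := Λ) hwlim)
  refine ⟨min δ (R / 2),
    ⟨lt_min hδ (by linarith), (min_le_right _ _).trans_lt (by linarith)⟩, ?_⟩
  intro ε hε b hb hwb
  have hbδ : b < δ := hb.2.trans_le (min_le_left _ _)
  have hbR : b < R := hb.2.trans_le ((min_le_right _ _).trans (by linarith))
  have hsub : Ioc 0 b ⊆ Ioo 0 R := fun x hx => ⟨hx.1, hx.2.trans_lt hbR⟩
  have hcont : ContinuousOn (fun r => w r - 1 + ε * r) (Ioc 0 b) := fun x hx =>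
    (ContinuousAt.add ((hEYM.2.1 x (hsub hx)).continuousAt.sub_const 1)
      (continuousAt_id.const_mul ε)).continuousWithinAt
  have hlim : Tendsto (fun r => w r - 1 + ε * r) (𝓝[>] 0) (𝓝 0) := by
    have := (hwlim.sub_const 1).add
      (((continuous_const_mul ε).tendsto 0).mono_left nhdsWithin_le_nhds)
    simpa using this
  have habove := nonneg_of_forall_not_isLocalMin hcont hlim (by linarith)
    fun c hc => not_isLocalMin_sub_line hEYM (hsub (Ioo_subset_Ioc_self hc))
      (hA c (hsub (Ioo_subset_Ioc_self hc))).1 hε (hgap ⟨hc.1, hc.2.trans hbδ⟩)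
  intro r hr
  exact ⟨by linarith [habove r hr], (hw r (hsub (Ioo_subset_Ioc_self hr))).1⟩
end

section
/- Let (A, w) be an EYM solution on (0, R) for some R > 0 with A(r) > 0 for all r ∈ (0, R) and A(r) → +∞ as r → 0⁺. Then w'(r) converges in the extended real numbers as r → 0⁺; that is, lim inf_{r → 0⁺} w'(r) = lim sup_{r → 0⁺} w'(r). -/
open Filter Topology Set

/-!
The Hawking mass `m`, with `A = 1 - 2m/r - Λr²/3`, satisfies
`m' = A w'² + (1 - w²)²/(2r²)`, so it is nondecreasing where `A ≥ 0`. Near `0`, where `A ≥ 1`,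
the term `(1 - w²)²/r²` dominates `w²` as soon as `w² ≥ 4`, so `w² + 2m` cannot increase as `r`
decreases there; this gives `w² ≤ C + r A` near `0`. At a critical point `s` of `w'` the
Yang–Mills equation becomes `(s²a + q) w' = s w (1 - w²)` with `a = A - 1 + Λs²`,
`q = (1 - w²)²`, and AM-GM yields `4 a w'² ≤ w²`. Since `A → ∞`, the critical values of `w'`
therefore tend to `0`. If `w'` did not converge, it would cross some level `c ≠ 0` infinitely
often near `0`, and between two crossings it would have a local extremum where `|w'| > |c|`.
-/

theorem le_max_of_deriv_nonneg_of_gt {f f' : ℝ → ℝ} {a b c : ℝ} (hab : a ≤ b)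
    (hf : ContinuousOn f (Icc a b)) (hf' : ∀ x ∈ Ioo a b, HasDerivAt f (f' x) x)
    (hf'₀ : ∀ x ∈ Ioo a b, c < f x → 0 ≤ f' x) : f a ≤ max (f b) c := by
  by_contra! hfa
  set Z := Icc a b ∩ f ⁻¹' Iic (max (f b) c)
  have hbZ : b ∈ Z := ⟨right_mem_Icc.mpr hab, show f b ≤ _ from le_max_left _ _⟩
  have hZ : IsClosed Z := hf.preimage_isClosed_of_isClosed isClosed_Icc isClosed_Iic
  have hZbdd : BddBelow Z := ⟨a, fun x hx => hx.1.1⟩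
  have hsZ : sInf Z ∈ Z := hZ.csInf_mem ⟨b, hbZ⟩ hZbdd
  set s := sInf Z
  have has : a < s := hsZ.1.1.lt_of_ne fun h => (h ▸ hsZ.2 : f a ≤ _).not_gt hfa
  have hgt : ∀ x ∈ Ico a s, max (f b) c < f x := fun x hx => by
    by_contra! hx'
    exact (csInf_le hZbdd ⟨⟨hx.1, hx.2.le.trans hsZ.1.2⟩, hx'⟩).not_gt hx.2
  have hmono : MonotoneOn f (Icc a s) := by
    refine monotoneOn_of_hasDerivWithinAt_nonneg (f' := f') (convex_Icc a s)
      (hf.mono (Icc_subset_Icc_right hsZ.1.2)) (fun x hx => ?_) (fun x hx => ?_) <;>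
      rw [interior_Icc] at hx
    · exact (hf' x ⟨hx.1, hx.2.trans_le hsZ.1.2⟩).hasDerivWithinAt
    · exact hf'₀ x ⟨hx.1, hx.2.trans_le hsZ.1.2⟩
        ((le_max_right _ _).trans_lt (hgt x ⟨hx.1.le, hx.2⟩))
  have := hmono (left_mem_Icc.mpr has.le) (right_mem_Icc.mpr has.le) has.le
  exact (hfa.trans_le this).not_ge hsZ.2

theorem frequently_isLocalMax_gt {f : ℝ → ℝ} {a c : ℝ}
    (hcont : ∀ᶠ x in 𝓝[>] a, ContinuousAt f x) (hlt : ∃ᶠ x in 𝓝[>] a, f x < c)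
    (hgt : ∃ᶠ x in 𝓝[>] a, c < f x) : ∃ᶠ x in 𝓝[>] a, IsLocalMax f x ∧ c < f x := by
  rw [Filter.frequently_iff]
  intro U hU
  obtain ⟨δ, hδ, hsub⟩ := mem_nhdsGT_iff_exists_Ioo_subset.mp (inter_mem hU hcont)
  obtain ⟨r₃, hr₃c, hr₃⟩ := (hlt.and_eventually (Ioo_mem_nhdsGT hδ)).exists
  obtain ⟨r₂, hr₂c, hr₂⟩ := (hgt.and_eventually (Ioo_mem_nhdsGT hr₃.1)).exists
  obtain ⟨r₁, hr₁c, hr₁⟩ := (hlt.and_eventually (Ioo_mem_nhdsGT hr₂.1)).exists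
  have hsub' : Icc r₁ r₃ ⊆ Ioo a δ := fun x hx => ⟨hr₁.1.trans_le hx.1, hx.2.trans_lt hr₃.2⟩
  obtain ⟨s, hs, hmax⟩ := (isCompact_Icc (a := r₁) (b := r₃)).exists_isMaxOn
    (nonempty_Icc.mpr (hr₁.2.trans hr₂.2).le) fun x hx => (hsub (hsub' hx)).2.continuousWithinAt
  have hcs : c < f s := hr₂c.trans_le (hmax ⟨hr₁.2.le, hr₂.2.le⟩)
  have hs₁ : r₁ < s := hs.1.lt_of_ne fun h => (h ▸ hr₁c).not_gt hcs
  have hs₃ : s < r₃ := hs.2.lt_of_ne fun h => (h ▸ hr₃c).not_gt hcs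
  exact ⟨s, (hsub (hsub' hs)).1, hmax.isLocalMax (Icc_mem_nhds hs₁ hs₃), hcs⟩

theorem EReal.exists_real_ne_zero_btwn {a b : EReal} (hab : a < b) :
    ∃ c : ℝ, c ≠ 0 ∧ a < c ∧ (c : EReal) < b := by
  obtain ⟨x, hax, hxb⟩ := EReal.lt_iff_exists_real_btwn.mp hab
  obtain ⟨y, hxy, hyb⟩ := EReal.lt_iff_exists_real_btwn.mp hxb
  by_cases hx : x = 0
  · exact ⟨y, (EReal.coe_lt_coe_iff.mp hxy).ne' ∘ (·.trans hx.symm), hax.trans hxy, hyb⟩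
  · exact ⟨x, hx, hax, hxy.trans hyb⟩

theorem liminf_eq_limsup_of_abs_lt_at_critical {f : ℝ → ℝ} {a : ℝ}
    (hcont : ∀ᶠ x in 𝓝[>] a, ContinuousAt f x)
    (hcrit : ∀ ε > 0, ∀ᶠ x in 𝓝[>] a, deriv f x = 0 → |f x| < ε) :
    liminf (fun x => (f x : EReal)) (𝓝[>] a) = limsup (fun x => (f x : EReal)) (𝓝[>] a) := by
  by_contra hne
  obtain ⟨c, hc0, hlt, hgt⟩ :=
    EReal.exists_real_ne_zero_btwn (lt_of_le_of_ne liminf_le_limsup hne)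
  have hlt : ∃ᶠ x in 𝓝[>] a, f x < c :=
    (frequently_lt_of_liminf_lt (by isBoundedDefault) hlt).mono fun _ => EReal.coe_lt_coe_iff.mp
  have hgt : ∃ᶠ x in 𝓝[>] a, c < f x :=
    (frequently_lt_of_lt_limsup (by isBoundedDefault) hgt).mono fun _ => EReal.coe_lt_coe_iff.mp
  rcases hc0.lt_or_gt with hc | hc
  · have hmin := frequently_isLocalMax_gt (f := fun x => -f x) (c := -c)
      (hcont.mono fun x hx => hx.neg) (hgt.mono fun x hx => neg_lt_neg hx)
      (hlt.mono fun x hx => neg_lt_neg hx)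
    obtain ⟨x, ⟨hmax, hx⟩, hcx⟩ := (hmin.and_eventually (hcrit (-c) (neg_pos.mpr hc))).exists
    have hder : deriv f x = 0 := by simpa using hmax.deriv_eq_zero
    exact (hcx hder).not_gt (hx.trans_le (neg_le_abs _))
  · obtain ⟨x, ⟨hmax, hx⟩, hcx⟩ :=
      ((frequently_isLocalMax_gt hcont hlt hgt).and_eventually (hcrit c hc)).exists
    exact (hcx hmax.deriv_eq_zero).not_gt (hx.trans_le (le_abs_self _))

/-- The Hawking mass `m`, defined by `A = 1 - 2m/r - Λr²/3`. -/
noncomputable def hawkingMass (Λ : ℝ) (A : ℝ → ℝ) (r : ℝ) : ℝ :=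
  r * (1 - A r) / 2 - Λ * r ^ 3 / 6

namespace IsEYM

variable {Λ : ℝ} {A w : ℝ → ℝ} {I : Set ℝ}

theorem hasDerivAt_hawkingMass (h : IsEYM Λ A w I) {r : ℝ} (hr : r ∈ I) :
    HasDerivAt (hawkingMass Λ A)
      (A r * deriv w r ^ 2 + (1 - w r ^ 2) ^ 2 / (2 * r ^ 2)) r := by
  have hm : HasDerivAt (fun s => s * (1 - A s) / 2 - Λ * s ^ 3 / 6)
      ((1 * (1 - A r) + r * (0 - deriv A r)) / 2 - Λ * (3 * r ^ 2) / 6) r := by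
    simpa using (((hasDerivAt_id' r).fun_mul ((hasDerivAt_const r 1).fun_sub
      (h.1 r hr).hasDerivAt)).div_const 2).fun_sub
      (((hasDerivAt_pow 3 r).const_mul Λ).div_const 6)
  refine hm.congr_deriv ?_
  have hfield := h.2.2.2.1 r hr
  rw [Phi] at hfield
  linear_combination (-1 / 2 : ℝ) * hfield

theorem monotoneOn_hawkingMass (h : IsEYM Λ A w I) {D : Set ℝ} (hD : Convex ℝ D)
    (hDI : D ⊆ I) (hA : ∀ r ∈ D, 0 ≤ A r) : MonotoneOn (hawkingMass Λ A) D := by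
  have hder : ∀ r ∈ D, HasDerivAt (hawkingMass Λ A) _ r := fun r hr =>
    h.hasDerivAt_hawkingMass (hDI hr)
  refine monotoneOn_of_hasDerivWithinAt_nonneg hD
    (fun r hr => (hder r hr).continuousAt.continuousWithinAt)
    (fun r hr => (hder r (interior_subset hr)).hasDerivWithinAt) fun r hr => ?_
  have := hA r (interior_subset hr)
  positivity

theorem sq_add_two_mul_hawkingMass_le (h : IsEYM Λ A w I) {r r₀ : ℝ} (hr : 0 < r)
    (hrr₀ : r ≤ r₀) (hr₀ : r₀ ≤ 1) (hI : Icc r r₀ ⊆ I) (hA : ∀ x ∈ Icc r r₀, 1 ≤ A x) :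
    w r ^ 2 + 2 * hawkingMass Λ A r ≤ w r₀ ^ 2 + 2 * hawkingMass Λ A r₀ + 4 := by
  have hder : ∀ x ∈ Icc r r₀, HasDerivAt (fun x => w x ^ 2 + 2 * hawkingMass Λ A x)
      (2 * w x * deriv w x + 2 * (A x * deriv w x ^ 2 + (1 - w x ^ 2) ^ 2 / (2 * x ^ 2))) x :=
    fun x hx => by
      simpa using ((h.2.1 x (hI hx)).hasDerivAt.fun_pow 2).fun_add
        ((h.hasDerivAt_hawkingMass (hI hx)).const_mul 2)
  have hmono := h.monotoneOn_hawkingMass (convex_Icc r r₀) hI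
    fun x hx => zero_le_one.trans (hA x hx)
  refine (le_max_of_deriv_nonneg_of_gt (c := 2 * hawkingMass Λ A r₀ + 4) hrr₀
    (fun x hx => (hder x hx).continuousAt.continuousWithinAt)
    (fun x hx => hder x (Ioo_subset_Icc_self hx)) fun x hx hgt => ?_).trans
    (max_le (by linarith) (by linarith [sq_nonneg (w r₀)]))
  have hx₀ : 0 < x := hr.trans hx.1
  have hw : 4 ≤ w x ^ 2 := by
    have := hmono ⟨hx.1.le, hx.2.le⟩ (right_mem_Icc.mpr hrr₀) hx.2.le
    linarith
  have hq : w x ^ 2 ≤ (1 - w x ^ 2) ^ 2 / x ^ 2 := by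
    rw [le_div_iff₀ (by positivity)]
    nlinarith [pow_le_one₀ hx₀.le (hx.2.le.trans hr₀) (n := 2)]
  have hAx : deriv w x ^ 2 ≤ A x * deriv w x ^ 2 :=
    le_mul_of_one_le_left (sq_nonneg _) (hA x ⟨hx.1.le, hx.2.le⟩)
  have : (1 - w x ^ 2) ^ 2 / (2 * x ^ 2) = (1 - w x ^ 2) ^ 2 / x ^ 2 / 2 := by ring
  rw [this]
  nlinarith [sq_nonneg (w x + deriv w x)]

theorem four_mul_sq_deriv_le (h : IsEYM Λ A w I) {s : ℝ} (hs : s ∈ I) (hs₀ : s ≠ 0)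
    (hcrit : deriv (deriv w) s = 0) (ha : 0 < A s - 1 + Λ * s ^ 2) :
    4 * (A s - 1 + Λ * s ^ 2) * deriv w s ^ 2 ≤ w s ^ 2 := by
  set a := A s - 1 + Λ * s ^ 2
  set q := (1 - w s ^ 2) ^ 2
  set d := deriv w s
  have hsa : 0 < s ^ 2 * a := by positivity
  have hYM : (s ^ 2 * a + q) * d = s * w s * (1 - w s ^ 2) := by
    have := h.2.2.2.2 s hs
    rw [hcrit, Phi] at this
    field_simp at this
    linear_combination (-1 : ℝ) * this
  have hamgm : 4 * (s ^ 2 * a) * q ≤ (s ^ 2 * a + q) ^ 2 := by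
    nlinarith [sq_nonneg (s ^ 2 * a - q)]
  have hsq : (s ^ 2 * a + q) ^ 2 * d ^ 2 = s ^ 2 * w s ^ 2 * q := by
    rw [← mul_pow, hYM]; ring
  have : 4 * a * d ^ 2 * (s ^ 2 * (s ^ 2 * a + q) ^ 2) ≤
      w s ^ 2 * (s ^ 2 * (s ^ 2 * a + q) ^ 2) := by
    nlinarith [mul_le_mul_of_nonneg_left hamgm (by positivity : 0 ≤ s ^ 2 * w s ^ 2)]
  exact le_of_mul_le_mul_right this (by positivity)

theorem exists_eventually_sq_le (h : IsEYM Λ A w I) (hI : I ∈ 𝓝[>] 0)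
    (hA : ∀ᶠ r in 𝓝[>] 0, 1 ≤ A r) : ∃ C, ∀ᶠ r in 𝓝[>] 0, w r ^ 2 ≤ C + r * A r := by
  obtain ⟨u, hu, hsub⟩ := mem_nhdsGT_iff_exists_Ioc_subset.mp (inter_mem hI hA)
  set r₀ := min u 1
  have hr₀ : 0 < r₀ := lt_min hu one_pos
  have hsub₀ : Ioc 0 r₀ ⊆ I ∩ {r | 1 ≤ A r} :=
    (Ioc_subset_Ioc_right (min_le_left u 1)).trans hsub
  refine ⟨w r₀ ^ 2 + 2 * hawkingMass Λ A r₀ + 4 + |Λ|, ?_⟩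
  filter_upwards [Ioc_mem_nhdsGT hr₀] with r hr
  have hIcc : Icc r r₀ ⊆ Ioc 0 r₀ := Icc_subset_Ioc_iff hr.2 |>.mpr ⟨hr.1, le_rfl⟩
  have hbound := h.sq_add_two_mul_hawkingMass_le hr.1 hr.2 (min_le_right u 1)
    (fun x hx => (hsub₀ (hIcc hx)).1) fun x hx => (hsub₀ (hIcc hx)).2
  have hr1 : r ≤ 1 := hr.2.trans (min_le_right u 1)
  have hΛ : Λ * r ^ 3 ≤ |Λ| := by
    calc Λ * r ^ 3 ≤ |Λ| * r ^ 3 :=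
          mul_le_mul_of_nonneg_right (le_abs_self Λ) (pow_pos hr.1 3).le
      _ ≤ |Λ| := mul_le_of_le_one_right (abs_nonneg Λ) (pow_le_one₀ hr.1.le hr1)
  have hm : 2 * hawkingMass Λ A r = r - r * A r - Λ * r ^ 3 / 3 := by
    unfold hawkingMass; ring
  linarith [abs_nonneg Λ, hr.1]

theorem eventually_sq_deriv_lt_of_critical (h : IsEYM Λ A w I) (hI : I ∈ 𝓝[>] 0)
    (hA : Tendsto A (𝓝[>] 0) atTop) {ε : ℝ} (hε : 0 < ε) :
    ∀ᶠ s in 𝓝[>] 0, deriv (deriv w) s = 0 → deriv w s ^ 2 < ε := by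
  obtain ⟨C, hC⟩ := h.exists_eventually_sq_le hI (hA.eventually_ge_atTop 1)
  filter_upwards [hC, hI, hA.eventually_ge_atTop (2 + 2 * |Λ|),
    hA.eventually_gt_atTop (C / ε), Ioo_mem_nhdsGT (lt_min hε one_pos)]
    with s hwC hsI hA₁ hA₂ hs hcrit
  have hs₁ : s < ε ∧ s < 1 := lt_min_iff.mp hs.2
  have hΛ : -|Λ| ≤ Λ * s ^ 2 := by
    refine (abs_le.mp ?_).1
    rw [abs_mul, abs_of_nonneg (sq_nonneg s)]
    exact mul_le_of_le_one_right (abs_nonneg Λ) (pow_le_one₀ hs.1.le hs₁.2.le)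
  have hAs : 0 < A s := by linarith [abs_nonneg Λ]
  have hd := h.four_mul_sq_deriv_le hsI hs.1.ne' hcrit (by linarith)
  have hCε : C < ε * A s := (div_lt_iff₀' hε).mp hA₂
  have hsA : s * A s < ε * A s := mul_lt_mul_of_pos_right hs₁.1 hAs
  refine lt_of_mul_lt_mul_left (a := 2 * A s) ?_ (by positivity)
  nlinarith [sq_nonneg (deriv w s)]

end IsEYM

theorem stmt_14_general (Λ R : ℝ) (A w : ℝ → ℝ) (hR : 0 < R)
    (hEYM : IsEYM Λ A w (Ioo 0 R))
    (hAinf : Filter.Tendsto A (𝓝[>] 0) atTop) :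
    Filter.liminf (fun r => ((deriv w r : ℝ) : EReal)) (𝓝[>] 0) =
      Filter.limsup (fun r => ((deriv w r : ℝ) : EReal)) (𝓝[>] 0) := by
  have hI : Ioo 0 R ∈ 𝓝[>] (0 : ℝ) := Ioo_mem_nhdsGT hR
  refine liminf_eq_limsup_of_abs_lt_at_critical ?_ fun ε hε => ?_
  · filter_upwards [hI] with r hr using (hEYM.2.2.1 r hr).continuousAt
  · filter_upwards [hEYM.eventually_sq_deriv_lt_of_critical hI hAinf (pow_pos hε 2)]
      with s hs hcrit using abs_lt_of_sq_lt_sq (hs hcrit) hε.le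

/-- if `A > 0` and `A → +∞` as `r → 0⁺`, then `w'` converges in
the extended reals as `r → 0⁺`. -/
theorem stmt_14 (Λ R : ℝ) (A w : ℝ → ℝ) (hR : 0 < R)
    (hEYM : IsEYM Λ A w (Ioo 0 R))
    (hApos : ∀ r ∈ Ioo (0 : ℝ) R, 0 < A r)
    (hAinf : Filter.Tendsto A (𝓝[>] 0) atTop) :
    Filter.liminf (fun r => ((deriv w r : ℝ) : EReal)) (𝓝[>] 0) =
      Filter.limsup (fun r => ((deriv w r : ℝ) : EReal)) (𝓝[>] 0) :=
  stmt_14_general Λ R A w hR hEYM hAinf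
end

section
/- Let (A, w) be an EYM solution on an open interval I ⊆ (0, ∞). Suppose r₀, s ∈ I with r₀ < s, w(r₀)² ≤ 1, A(r) > 0 for all r ∈ [r₀, s], and there exists r_e ∈ (r₀, s] with w(r_e)² > 1. Then w(r)² > 1 for all r ∈ [r_e, s]; that is, once the solution leaves the region {w² ≤ 1} while A remains positive, it never re-enters it. -/
open Filter Topology Set

/-- once the solution leaves the region `{w² ≤ 1}` while `A`
remains positive, it never re-enters it. -/
theorem stmt_16 (Λ a b : ℝ) (A w : ℝ → ℝ)
    (hI : Ioo a b ⊆ Ioi 0)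
    (hEYM : IsEYM Λ A w (Ioo a b))
    (r₀ s : ℝ) (hr₀ : r₀ ∈ Ioo a b) (hs : s ∈ Ioo a b) (hrs : r₀ < s)
    (hw₀ : (w r₀) ^ 2 ≤ 1)
    (hApos : ∀ r ∈ Icc r₀ s, 0 < A r)
    (r_e : ℝ) (hre : r_e ∈ Ioc r₀ s) (hwe : (w r_e) ^ 2 > 1) :
    ∀ r ∈ Icc r_e s, (w r) ^ 2 > 1 := by
  obtain ⟨hA, hw, hw', heq1, heq2⟩ := hEYM
  by_contra hcon
  push_neg at hcon
  obtain ⟨t, ht, hwt⟩ := hcon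
  have hts : t ≤ s := ht.2
  have hrt : r₀ < t := lt_of_lt_of_le hre.1 ht.1
  have hsub : Icc r₀ s ⊆ Ioo a b := Icc_subset_Ioo hr₀.1 hs.2
  set u : ℝ → ℝ := fun r => (w r) ^ 2 - 1 with hu
  have hderiv_u : ∀ r ∈ Ioo a b, HasDerivAt u (2 * w r * deriv w r) r := by
    intro r hr
    have h := ((hw r hr).hasDerivAt.pow 2).sub_const 1
    have : ((2 : ℕ) : ℝ) * w r ^ (2 - 1) * deriv w r = 2 * w r * deriv w r := by
      norm_num
    rwa [this] at h
  have hmemIcc : ∀ r ∈ Icc r₀ t, r ∈ Icc r₀ s := fun r hr => ⟨hr.1, hr.2.trans hts⟩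
  have hcontu : ContinuousOn u (Icc r₀ t) := fun r hr =>
    ((hderiv_u r (hsub (hmemIcc r hr))).differentiableAt.continuousAt).continuousWithinAt
  obtain ⟨m, hm, hmax⟩ := isCompact_Icc.exists_isMaxOn (nonempty_Icc.mpr hrt.le) hcontu
  have hre_mem : r_e ∈ Icc r₀ t := ⟨hre.1.le, ht.1⟩
  have hum : 0 < u m := lt_of_lt_of_le (by simp only [hu]; linarith) (hmax hre_mem)
  have hwm2 : 1 < (w m) ^ 2 := by simp only [hu] at hum; linarith
  have hwm0 : w m ≠ 0 := by
    intro h; rw [h] at hwm2; norm_num at hwm2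
  have hr₀m : r₀ < m := by
    rcases lt_or_eq_of_le hm.1 with h | h
    · exact h
    · exfalso; rw [← h] at hum; simp only [hu] at hum; linarith
  have hmt : m < t := by
    rcases lt_or_eq_of_le hm.2 with h | h
    · exact h
    · exfalso; rw [h] at hum; simp only [hu] at hum; linarith
  have hmIcc : m ∈ Icc r₀ s := hmemIcc m hm
  have hmI : m ∈ Ioo a b := hsub hmIcc
  have hmpos : (0 : ℝ) < m := hI hmI
  have hAm : 0 < A m := hApos m hmIcc
  -- deriv w m = 0
  have hlocmax : IsLocalMax u m := hmax.isLocalMax (Icc_mem_nhds hr₀m hmt)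
  have hdu0 : 2 * w m * deriv w m = 0 := by
    rw [← (hderiv_u m hmI).deriv]; exact hlocmax.deriv_eq_zero
  have hw'm : deriv w m = 0 := by
    rcases mul_eq_zero.mp hdu0 with h | h
    · rcases mul_eq_zero.mp h with h' | h'
      · norm_num at h'
      · exact absurd h' hwm0
    · exact h
  -- second derivative
  have heqm := heq2 m hmI
  rw [hw'm] at heqm
  have hw''m : deriv (deriv w) m = w m * ((w m) ^ 2 - 1) / (m ^ 2 * A m) := by
    have hne : m ^ 2 * A m ≠ 0 := by positivity
    field_simp
    nlinarith [heqm]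
  set g : ℝ → ℝ := fun r => 2 * (w r * deriv w r) with hg
  set K : ℝ := 2 * (deriv w m * deriv w m + w m * deriv (deriv w) m) with hK
  have hgK : HasDerivAt g K m :=
    ((hw m hmI).hasDerivAt.mul (hw' m hmI).hasDerivAt).const_mul 2
  have hKpos : 0 < K := by
    rw [hK, hw'm, hw''m]
    have h1 : 0 < (w m) ^ 2 := by positivity
    have h2 : 0 < (w m) ^ 2 - 1 := by linarith
    have h3 : 0 < m ^ 2 * A m := by positivity
    have : 2 * (0 * 0 + w m * (w m * ((w m) ^ 2 - 1) / (m ^ 2 * A m)))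
        = 2 * ((w m) ^ 2 * ((w m) ^ 2 - 1)) / (m ^ 2 * A m) := by
      field_simp; ring
    rw [this]
    positivity
  have hgm : g m = 0 := by rw [hg]; simp only; rw [hw'm]; ring
  -- g is positive just to the right of m
  have hslope : Tendsto (slope g m) (𝓝[≠] m) (𝓝 K) :=
    hasDerivAt_iff_tendsto_slope.mp hgK
  have hev : ∀ᶠ x in 𝓝[>] m, 0 < slope g m x := by
    have h1 : ∀ᶠ x in 𝓝[≠] m, 0 < slope g m x :=
      hslope.eventually (eventually_gt_nhds hKpos)
    exact h1.filter_mono (nhdsWithin_mono m (fun x hx => ne_of_gt hx))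
  obtain ⟨ε, hε, hIoo⟩ := mem_nhdsGT_iff_exists_Ioo_subset.mp hev
  have hgpos : ∀ x ∈ Ioo m ε, 0 < g x := by
    intro x hx
    have hs' : 0 < slope g m x := hIoo hx
    have hxm : 0 < x - m := by linarith [hx.1]
    have : slope g m x = g x / (x - m) := by
      rw [slope_def_field, hgm, sub_zero]
    rw [this] at hs'
    have := mul_pos hs' hxm
    rwa [div_mul_cancel₀ _ (ne_of_gt hxm)] at this
  -- choose x
  have hmε : m < ε := hε
  set x : ℝ := (m + min ε t) / 2 with hx
  have hmin : m < min ε t := lt_min hmε hmt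
  have hmx : m < x := by simp only [hx]; linarith
  have hxε : x < ε := by
    have := min_le_left ε t
    simp only [hx]; linarith
  have hxt : x < t := by
    have := min_le_right ε t
    simp only [hx]; linarith
  have hxIcc : Icc m x ⊆ Ioo a b := by
    intro r hr
    exact ⟨lt_of_lt_of_le hmI.1 hr.1, lt_of_le_of_lt hr.2
      ((hxt.trans_le hts).trans hs.2)⟩
  have hmono : StrictMonoOn u (Icc m x) := by
    apply strictMonoOn_of_deriv_pos (convex_Icc m x)
    · intro r hr
      exact ((hderiv_u r (hxIcc hr)).differentiableAt.continuousAt).continuousWithinAt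
    · intro r hr
      rw [interior_Icc] at hr
      have hrI : r ∈ Ioo a b := hxIcc ⟨hr.1.le, hr.2.le⟩
      rw [(hderiv_u r hrI).deriv]
      have : 2 * w r * deriv w r = g r := by rw [hg]; ring
      rw [this]
      exact hgpos r ⟨hr.1, lt_trans hr.2 hxε⟩
  have hlt : u m < u x := hmono (left_mem_Icc.mpr hmx.le) (right_mem_Icc.mpr hmx.le) hmx
  have hxmem : x ∈ Icc r₀ t := ⟨le_of_lt (hr₀m.trans hmx), hxt.le⟩
  exact absurd (hmax hxmem) (not_le.mpr hlt)
end

section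
/- Let (A, w) be an EYM solution on an open interval I ⊆ (0, ∞) with A(r) ≥ 0 for all r ∈ I, and define μ(r) = r·(1 − A(r) − Λ·r²/3). Then for every r ∈ I, μ is differentiable at r with μ'(r) = (1 − w(r)²)²/r² + 2·A(r)·w'(r)² ≥ 0; in particular, μ is monotone nondecreasing on I. -/
open Filter Topology Set

/-- the mass function `μ(r) = r(1 − A(r) − Λr²/3)` has
derivative `(1 − w²)²/r² + 2Aw'² ≥ 0`, hence is monotone nondecreasing. -/
theorem stmt_19 (Λ a b : ℝ) (A w : ℝ → ℝ)
    (hI : Ioo a b ⊆ Ioi 0)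
    (hEYM : IsEYM Λ A w (Ioo a b))
    (hA : ∀ r ∈ Ioo a b, 0 ≤ A r) :
    (∀ r ∈ Ioo a b,
      HasDerivAt (fun s => s * (1 - A s - Λ * s ^ 2 / 3))
        ((1 - (w r) ^ 2) ^ 2 / r ^ 2 + 2 * A r * (deriv w r) ^ 2) r ∧
      0 ≤ (1 - (w r) ^ 2) ^ 2 / r ^ 2 + 2 * A r * (deriv w r) ^ 2) ∧
    MonotoneOn (fun s => s * (1 - A s - Λ * s ^ 2 / 3)) (Ioo a b) := by
  obtain ⟨hAd, _, _, heq, _⟩ := hEYM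
  have key : ∀ r ∈ Ioo a b,
      HasDerivAt (fun s => s * (1 - A s - Λ * s ^ 2 / 3))
        ((1 - (w r) ^ 2) ^ 2 / r ^ 2 + 2 * A r * (deriv w r) ^ 2) r ∧
      0 ≤ (1 - (w r) ^ 2) ^ 2 / r ^ 2 + 2 * A r * (deriv w r) ^ 2 := by
    intro r hr
    have hA' : HasDerivAt A (deriv A r) r := (hAd r hr).hasDerivAt
    have h1 : HasDerivAt (fun s => s * (1 - A s - Λ * s ^ 2 / 3))
        (1 * (1 - A r - Λ * r ^ 2 / 3) +
          r * (0 - deriv A r - Λ * (2 * r ^ 1) / 3)) r := by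
      exact (hasDerivAt_id r).mul
        (((hasDerivAt_const r (1:ℝ)).sub hA').sub
          (((hasDerivAt_pow 2 r).const_mul Λ).div_const 3))
    have hΦ := heq r hr
    unfold Phi at hΦ
    have hrA : r * deriv A r = 1 - A r - (1 - (w r) ^ 2) ^ 2 / r ^ 2
        - Λ * r ^ 2 - 2 * A r * (deriv w r) ^ 2 := by linarith
    constructor
    · convert h1 using 1
      ring_nf
      ring_nf at hrA
      linarith
    · have h2 : 0 ≤ (1 - (w r) ^ 2) ^ 2 / r ^ 2 :=
        div_nonneg (sq_nonneg _) (sq_nonneg _)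
      have h3 : 0 ≤ 2 * A r * (deriv w r) ^ 2 :=
        mul_nonneg (by linarith [hA r hr]) (sq_nonneg _)
      linarith
  refine ⟨key, ?_⟩
  have hint : interior (Ioo a b) = Ioo a b := interior_Ioo
  refine monotoneOn_of_deriv_nonneg (convex_Ioo a b) ?_ ?_ ?_
  · intro x hx
    exact ((key x hx).1.differentiableAt).continuousAt.continuousWithinAt
  · rw [hint]
    intro x hx
    exact ((key x hx).1.differentiableAt).differentiableWithinAt
  · rw [hint]
    intro x hx
    rw [(key x hx).1.deriv]
    exact (key x hx).2
end
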